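/- arXiv:1412.2354 — 4 statements merged into one kernel-verified Lean document; each statement's English description precedes it below -/
import Mathlib

section
/- Let $\{\varepsilon_\lambda\}_{\lambda\geq 1}$ be positive reals such that there exists $\alpha>0$ with $\varepsilon_\lambda < (2\lambda)^\alpha$ for all $\lambda$, and such that $\varepsilon_{\nu-\mu}^{-1} \leq \varepsilon_\nu^{-1} + \varepsilon_\mu^{-1}$ for all $\nu > \mu \geq 1$. Then for every power series $f(Z) = \sum_{\lambda=2}^\infty a_\lambda Z^\lambda$ with positive radius of convergence, the formal power series $g(Z) = Z + \sum_{\lambda=2}^\infty c_\lambda Z^\lambda$ uniquely determined by the equation $\sum_{\lambda=2}^\infty \varepsilon_{\lambda-1}^{-1} c_\lambda Z^\lambda = f(g(Z))$ has a positive radius of convergence. -/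
/-!
Siegel's majorant method. Put `E n = max (ε (n - 1)) 1`. If `Θ ≥ 0` satisfies
`8 E (i + j) Θ i Θ j ≤ s Θ (i + j)`, then, since `∑_{i + j = n} 1 / (i² j²) ≤ 8 / n²`, the series
`B = ∑ Θ k / k² Zᵏ` satisfies `s E n [Zⁿ] Bˡ ≤ sˡ Θ n / n²` for `l ≥ 2`; if moreover
`∑ ‖a l‖ sˡ ≤ s`, the recursion for `c` gives `‖c n‖ ≤ Θ n / n²` by strong induction.

The small denominators are absorbed by `Θ k = 2 ^ w k * τ ^ (k - 1)`, `τ = 16 / s`, where `w k`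
is the largest sum of `⌊log₂ ε (m - 1)⌋` over the nodes `m` of a binary splitting tree of `k`.
By the growth bound and the subadditivity of `1 / ε`, the sizes `m` with `ε (m - 1) ≥ 2 ^ (t + 1)`
are at least `2 ^ (t / α) / 2` apart, so Siegel's counting argument allows at most
`4 k 2 ^ (-t / α)` such nodes in a tree of size `k`. Summing over `t` gives `w k ≤ K k`, so `c`
grows at most geometrically.
-/

open PowerSeries Finset

namespace PowerSeries

theorem coeff_pow_nonneg {S : Type*} [Semiring S] [PartialOrder S] [IsOrderedRing S] {ψ : S⟦X⟧}
    (hψ : ∀ k, 0 ≤ coeff k ψ) (l k : ℕ) : 0 ≤ coeff k (ψ ^ l) := by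
  induction l generalizing k with
  | zero => rw [pow_zero, coeff_one]; split_ifs <;> norm_num
  | succ l ih =>
    rw [pow_succ, coeff_mul]
    exact sum_nonneg fun p _ => mul_nonneg (ih _) (hψ _)

variable {R : Type*} [SeminormedRing R] [NormOneClass R]

theorem norm_coeff_pow_le {φ : R⟦X⟧} {ψ : ℝ⟦X⟧} {N : ℕ}
    (h : ∀ k ≤ N, ‖coeff k φ‖ ≤ coeff k ψ) (l : ℕ) {k : ℕ} (hk : k ≤ N) :
    ‖coeff k (φ ^ l)‖ ≤ coeff k (ψ ^ l) := by
  induction l generalizing k with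
  | zero => rw [pow_zero, pow_zero, coeff_one, coeff_one]; split_ifs <;> simp
  | succ l ih =>
    rw [pow_succ, pow_succ, coeff_mul, coeff_mul]
    refine (norm_sum_le _ _).trans (sum_le_sum fun p hp => ?_)
    have hp := mem_antidiagonal.mp hp
    exact (norm_mul_le _ _).trans <| mul_le_mul (ih (by omega)) (h _ (by omega))
      (norm_nonneg _) ((norm_nonneg _).trans (ih (by omega)))

/-- As `constantCoeff φ = 0`, `coeff n φ` does not enter `coeff n (φ ^ (l + 2))`. -/
theorem norm_coeff_pow_add_two_le {φ : R⟦X⟧} {ψ : ℝ⟦X⟧} {n : ℕ} (hψ : ∀ k, 0 ≤ coeff k ψ)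
    (hφ : constantCoeff φ = 0) (h : ∀ k < n, ‖coeff k φ‖ ≤ coeff k ψ) (l : ℕ) :
    ‖coeff n (φ ^ (l + 2))‖ ≤ coeff n (ψ ^ (l + 2)) := by
  rw [pow_succ, pow_succ ψ, coeff_mul, coeff_mul]
  refine (norm_sum_le _ _).trans (sum_le_sum fun p hp => ?_)
  have hp := mem_antidiagonal.mp hp
  have hrhs := mul_nonneg (coeff_pow_nonneg hψ (l + 1) p.1) (hψ p.2)
  obtain h1 | h1 := Nat.eq_zero_or_pos p.1
  · rw [h1] at hrhs ⊢
    rwa [coeff_zero_eq_constantCoeff_apply, map_pow, hφ, zero_pow (by omega), zero_mul,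
      norm_zero]
  obtain h2 | h2 := Nat.eq_zero_or_pos p.2
  · rw [h2] at hrhs ⊢
    rwa [coeff_zero_eq_constantCoeff_apply, hφ, mul_zero, norm_zero]
  have hlt : ∀ k ≤ n - 1, ‖coeff k φ‖ ≤ coeff k ψ := fun k hk => h k (by omega)
  exact (norm_mul_le _ _).trans <| mul_le_mul (norm_coeff_pow_le hlt _ (by omega))
    (h _ (by omega)) (norm_nonneg _) (coeff_pow_nonneg hψ _ _)

end PowerSeries

theorem sum_antidiagonal_inv_sq_mul_inv_sq_le (n : ℕ) :
    ∑ p ∈ antidiagonal n, ((p.1 : ℝ) ^ 2)⁻¹ * ((p.2 : ℝ) ^ 2)⁻¹ ≤ 8 / (n : ℝ) ^ 2 := by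
  have hterm : ∀ p ∈ antidiagonal n, ((p.1 : ℝ) ^ 2)⁻¹ * ((p.2 : ℝ) ^ 2)⁻¹ ≤
      2 / (n : ℝ) ^ 2 * (((p.1 : ℝ) ^ 2)⁻¹ + ((p.2 : ℝ) ^ 2)⁻¹) := by
    intro p hp
    have hp : (p.1 : ℝ) + p.2 = n := by exact_mod_cast mem_antidiagonal.mp hp
    obtain h1 | h1 := eq_or_ne (p.1 : ℝ) 0
    · rw [h1, zero_pow two_ne_zero, inv_zero, zero_mul, zero_add]
      positivity
    obtain h2 | h2 := eq_or_ne (p.2 : ℝ) 0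
    · rw [h2, zero_pow two_ne_zero, inv_zero, mul_zero, add_zero]
      positivity
    rw [← hp, div_mul_eq_mul_div, le_div_iff₀ (by positivity)]
    field_simp
    nlinarith [sq_nonneg ((p.1 : ℝ) - p.2)]
  have hhalf : ∑ p ∈ antidiagonal n, ((p.1 : ℝ) ^ 2)⁻¹ ≤ 2 := by
    rw [Finset.Nat.sum_antidiagonal_eq_sum_range_succ_mk]
    calc ∑ i ∈ range n.succ, ((i : ℝ) ^ 2)⁻¹ = ∑ i ∈ Ioo 0 (n + 1), ((i : ℝ) ^ 2)⁻¹ := by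
          refine (sum_subset (fun i hi => ?_) fun i hi hi' => ?_).symm
          · simp only [mem_Ioo, mem_range] at hi ⊢; omega
          · obtain rfl : i = 0 := by simp only [mem_Ioo, mem_range] at hi hi'; omega
            simp
      _ ≤ 2 := by simpa using sum_Ioo_inv_sq_le (α := ℝ) 0 (n + 1)
  have hswap : ∑ p ∈ antidiagonal n, ((p.2 : ℝ) ^ 2)⁻¹ = ∑ p ∈ antidiagonal n, ((p.1 : ℝ) ^ 2)⁻¹ :=
    Finset.Nat.sum_antidiagonal_swap.symm
  calc _ ≤ ∑ p ∈ antidiagonal n, 2 / (n : ℝ) ^ 2 * (((p.1 : ℝ) ^ 2)⁻¹ + ((p.2 : ℝ) ^ 2)⁻¹) :=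
        sum_le_sum hterm
    _ = 2 / (n : ℝ) ^ 2 * (2 * ∑ p ∈ antidiagonal n, ((p.1 : ℝ) ^ 2)⁻¹) := by
        rw [← mul_sum, sum_add_distrib, hswap, two_mul]
    _ ≤ 2 / (n : ℝ) ^ 2 * (2 * 2) := by gcongr
    _ = 8 / (n : ℝ) ^ 2 := by ring

/-- The junk value `(0 : ℝ)⁻¹ = 0` makes the constant coefficient vanish. -/
noncomputable def invSqWeightSeries (Θ : ℕ → ℝ) : ℝ⟦X⟧ := mk fun k => Θ k / (k : ℝ) ^ 2

section invSqWeightSeries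

variable {Θ : ℕ → ℝ} {s : ℝ}

theorem coeff_invSqWeightSeries_nonneg (hΘ : ∀ k, 0 ≤ Θ k) (k : ℕ) :
    0 ≤ coeff k (invSqWeightSeries Θ) := by
  rw [invSqWeightSeries, coeff_mk]
  exact div_nonneg (hΘ k) (sq_nonneg _)

/-- `hprod` merges `Θ i * Θ j` into `Θ n` at the cost `s / 8`, which
`∑_{i + j = n} 1 / (i² j²) ≤ 8 / n²` pays back. -/
theorem mul_coeff_invSqWeightSeries_pow_add_two_le (hΘ : ∀ k, 0 ≤ Θ k) (hs : 0 ≤ s) {l n : ℕ}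
    {e : ℝ} (he : 0 ≤ e)
    (hpow : ∀ i, s * coeff i (invSqWeightSeries Θ ^ (l + 1)) ≤ s ^ (l + 1) * (Θ i / (i : ℝ) ^ 2))
    (hprod : ∀ i j, 1 ≤ i → 1 ≤ j → i + j = n → 8 * e * (Θ i * Θ j) ≤ s * Θ n) :
    s * (e * coeff n (invSqWeightSeries Θ ^ (l + 2))) ≤ s ^ (l + 2) * (Θ n / (n : ℝ) ^ 2) := by
  set w : ℕ × ℕ → ℝ := fun p => ((p.1 : ℝ) ^ 2)⁻¹ * ((p.2 : ℝ) ^ 2)⁻¹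
  have hterm : ∀ p ∈ antidiagonal n, 8 * e * (Θ p.1 * Θ p.2) * w p ≤ s * Θ n * w p := by
    intro p hp
    have hp := mem_antidiagonal.mp hp
    obtain h0 | h0 := eq_or_ne (w p) 0
    · simp [h0]
    have h1 : p.1 ≠ 0 := by rintro h; simp [w, h] at h0
    have h2 : p.2 ≠ 0 := by rintro h; simp [w, h] at h0
    exact mul_le_mul_of_nonneg_right (hprod _ _ (by omega) (by omega) hp) (by positivity)
  calc s * (e * coeff n (invSqWeightSeries Θ ^ (l + 2)))
      = ∑ p ∈ antidiagonal n, e * (s * coeff p.1 (invSqWeightSeries Θ ^ (l + 1))) *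
          (Θ p.2 / (p.2 : ℝ) ^ 2) := by
        rw [pow_succ, coeff_mul, mul_sum, mul_sum]
        simp only [invSqWeightSeries, coeff_mk]
        exact sum_congr rfl fun p _ => by ring
    _ ≤ ∑ p ∈ antidiagonal n, e * (s ^ (l + 1) * (Θ p.1 / (p.1 : ℝ) ^ 2)) *
          (Θ p.2 / (p.2 : ℝ) ^ 2) := by
        refine sum_le_sum fun p _ => mul_le_mul_of_nonneg_right ?_ (div_nonneg (hΘ _) (sq_nonneg _))
        exact mul_le_mul_of_nonneg_left (hpow p.1) he
    _ = s ^ (l + 1) / 8 * ∑ p ∈ antidiagonal n, 8 * e * (Θ p.1 * Θ p.2) * w p := by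
        rw [mul_sum]
        exact sum_congr rfl fun p _ => by simp only [w]; ring
    _ ≤ s ^ (l + 1) / 8 * ∑ p ∈ antidiagonal n, s * Θ n * w p := by
        exact mul_le_mul_of_nonneg_left (sum_le_sum hterm) (by positivity)
    _ ≤ s ^ (l + 1) / 8 * (s * Θ n * (8 / (n : ℝ) ^ 2)) := by
        rw [← mul_sum]
        gcongr
        · exact mul_nonneg hs (hΘ n)
        · exact sum_antidiagonal_inv_sq_mul_inv_sq_le n
    _ = s ^ (l + 2) * (Θ n / (n : ℝ) ^ 2) := by ring

variable {E : ℕ → ℝ}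

theorem mul_coeff_invSqWeightSeries_pow_succ_le (hΘ : ∀ k, 0 ≤ Θ k) (hs : 0 ≤ s)
    (hE : ∀ n, 1 ≤ E n)
    (hΘE : ∀ i j, 1 ≤ i → 1 ≤ j → 8 * E (i + j) * (Θ i * Θ j) ≤ s * Θ (i + j)) (l n : ℕ) :
    s * coeff n (invSqWeightSeries Θ ^ (l + 1)) ≤ s ^ (l + 1) * (Θ n / (n : ℝ) ^ 2) := by
  induction l generalizing n with
  | zero => simp [invSqWeightSeries]
  | succ l ih =>
    simpa using mul_coeff_invSqWeightSeries_pow_add_two_le hΘ hs zero_le_one ih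
      fun i j hi hj hij => hij ▸ le_trans
        (mul_le_mul_of_nonneg_right (by linarith [hE (i + j)]) (mul_nonneg (hΘ i) (hΘ j)))
        (hΘE i j hi hj)

theorem mul_mul_coeff_invSqWeightSeries_pow_le (hΘ : ∀ k, 0 ≤ Θ k) (hs : 0 ≤ s)
    (hE : ∀ n, 1 ≤ E n)
    (hΘE : ∀ i j, 1 ≤ i → 1 ≤ j → 8 * E (i + j) * (Θ i * Θ j) ≤ s * Θ (i + j)) {l : ℕ}
    (hl : 2 ≤ l) (n : ℕ) :
    s * (E n * coeff n (invSqWeightSeries Θ ^ l)) ≤ s ^ l * (Θ n / (n : ℝ) ^ 2) := by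
  obtain ⟨l, rfl⟩ := Nat.exists_eq_add_of_le' hl
  exact mul_coeff_invSqWeightSeries_pow_add_two_le hΘ hs (zero_le_one.trans (hE n))
    (mul_coeff_invSqWeightSeries_pow_succ_le hΘ hs hE hΘE l)
    fun i j hi hj hij => hij ▸ hΘE i j hi hj

end invSqWeightSeries

/-- The largest total weight `∑ f m` over the internal nodes `m` of a binary tree whose leaves
have size `1` and in which every internal node of size `m` splits into two subtrees of positive
sizes adding up to `m`. -/
def maxTreeWeight (f : ℕ → ℕ) : ℕ → ℕ
  | 0 => 0
  | 1 => 0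
  | n + 2 => f (n + 2) +
      (Ioo 0 (n + 2)).attach.sup fun a => maxTreeWeight f a + maxTreeWeight f (n + 2 - a)
decreasing_by
  all_goals have := mem_Ioo.mp a.2
  all_goals omega

namespace maxTreeWeight

variable (f : ℕ → ℕ)

theorem of_le_one {n : ℕ} (hn : n ≤ 1) : maxTreeWeight f n = 0 := by
  interval_cases n <;> rw [maxTreeWeight]

theorem add_add_le {a b : ℕ} (ha : 1 ≤ a) (hb : 1 ≤ b) :
    f (a + b) + maxTreeWeight f a + maxTreeWeight f b ≤ maxTreeWeight f (a + b) := by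
  obtain ⟨n, hn⟩ : ∃ n, a + b = n + 2 := ⟨a + b - 2, by omega⟩
  have hmem : a ∈ Ioo 0 (n + 2) := mem_Ioo.mpr ⟨ha, by omega⟩
  have hb' : n + 2 - a = b := by omega
  rw [hn, maxTreeWeight, add_assoc]
  gcongr
  exact hb' ▸ le_sup (f := fun a : Ioo 0 (n + 2) => maxTreeWeight f a + maxTreeWeight f (n + 2 - a))
    (mem_attach _ ⟨a, hmem⟩)

theorem exists_eq_add {n : ℕ} (hn : 2 ≤ n) : ∃ a b, 1 ≤ a ∧ 1 ≤ b ∧ a + b = n ∧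
    maxTreeWeight f n = f n + maxTreeWeight f a + maxTreeWeight f b := by
  obtain ⟨n, rfl⟩ := Nat.exists_eq_add_of_le' hn
  obtain ⟨a, -, ha⟩ := exists_mem_eq_sup (Ioo 0 (n + 2)).attach
    (attach_nonempty_iff.mpr ⟨1, mem_Ioo.mpr ⟨one_pos, by omega⟩⟩)
    fun a => maxTreeWeight f a + maxTreeWeight f (n + 2 - a)
  have := mem_Ioo.mp a.2
  exact ⟨a, n + 2 - a, by omega, by omega, by omega, by rw [maxTreeWeight, ha, add_assoc]⟩

theorem le_sum {ι : Type*} (s : Finset ι) (g : ι → ℕ → ℕ) {n : ℕ}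
    (h : ∀ m ≤ n, f m ≤ ∑ t ∈ s, g t m) :
    maxTreeWeight f n ≤ ∑ t ∈ s, maxTreeWeight (g t) n := by
  induction n using Nat.strong_induction_on with
  | _ n ih =>
    obtain hn | hn := le_or_gt n 1
    · simp [of_le_one f hn]
    obtain ⟨a, b, ha, hb, rfl, heq⟩ := exists_eq_add f hn
    calc maxTreeWeight f (a + b)
        ≤ ∑ t ∈ s, g t (a + b) + ∑ t ∈ s, maxTreeWeight (g t) a +
            ∑ t ∈ s, maxTreeWeight (g t) b := by
          rw [heq]
          gcongr
          · exact h _ le_rfl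
          · exact ih a (by omega) fun m hm => h m (by omega)
          · exact ih b (by omega) fun m hm => h m (by omega)
      _ ≤ ∑ t ∈ s, maxTreeWeight (g t) (a + b) := by
          rw [← sum_add_distrib, ← sum_add_distrib]
          exact sum_le_sum fun t _ => add_add_le (g t) ha hb

section Counting

variable {G : ℕ → Prop} {σ : ℝ}

/-- The multiset `T` lists the sizes of the marked nodes below a marked root `n` that have no
marked node between them and the root. With two or more of them the bound is inherited; with one,
say `m`, the gap `σ ≤ n - m` pays for the root; with none, `σ ≤ n` does. -/
theorem mul_add_two_le_of_multiset (hσ : 0 < σ) (hmin : ∀ m, 2 ≤ m → G m → σ ≤ m)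
    (hgap : ∀ m m', 2 ≤ m' → m' < m → G m → G m' → σ ≤ (m : ℝ) - m') {n : ℕ} (hn : 2 ≤ n)
    (hG : G n) (T : Multiset ℕ)
    (hT : ∀ m ∈ T, 2 ≤ m ∧ G m ∧ m < n) (hsum : T.sum ≤ n) {k : ℝ}
    (hk : σ * (k + Multiset.card T) ≤ 2 * T.sum) : σ * (k + 2) ≤ 2 * n := by
  have hsum : (T.sum : ℝ) ≤ n := by exact_mod_cast hsum
  obtain hc | hc | hc : Multiset.card T = 0 ∨ Multiset.card T = 1 ∨ 2 ≤ Multiset.card T := by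
    omega
  · obtain rfl := Multiset.card_eq_zero.mp hc
    have := hmin n hn hG
    simp only [Multiset.card_zero, CharP.cast_eq_zero, add_zero, Multiset.sum_zero] at hk
    linarith
  · obtain ⟨m, rfl⟩ := Multiset.card_eq_one.mp hc
    obtain ⟨hm2, hGm, hmn⟩ := hT m (Multiset.mem_singleton_self m)
    have := hgap n m hm2 hmn hG hGm
    simp only [Multiset.card_singleton, Nat.cast_one, Multiset.sum_singleton] at hk
    linarith
  · have : (2 : ℝ) ≤ Multiset.card T := by exact_mod_cast hc
    nlinarith

theorem exists_multiset_mul_indicator_le [DecidablePred G] (hσ : 0 < σ)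
    (hmin : ∀ m, 2 ≤ m → G m → σ ≤ m)
    (hgap : ∀ m m', 2 ≤ m' → m' < m → G m → G m' → σ ≤ (m : ℝ) - m') (n : ℕ) :
    ∃ T : Multiset ℕ, (∀ m ∈ T, 2 ≤ m ∧ G m) ∧ T.sum ≤ n ∧
      σ * (maxTreeWeight (fun m => if G m then 1 else 0) n + Multiset.card T) ≤ 2 * T.sum := by
  induction n using Nat.strong_induction_on with
  | _ n ih =>
  obtain hn | hn := le_or_gt n 1
  · exact ⟨0, by simp, by simp, by simp [maxTreeWeight.of_le_one _ hn]⟩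
  obtain ⟨a, b, ha, hb, rfl, heq⟩ := maxTreeWeight.exists_eq_add (fun m => if G m then 1 else 0) hn
  set κ := maxTreeWeight fun m => if G m then 1 else 0
  obtain ⟨A, hAG, hAsum, hA⟩ := ih a (by omega)
  obtain ⟨B, hBG, hBsum, hB⟩ := ih b (by omega)
  by_cases hG : G (a + b)
  · refine ⟨{a + b}, by simpa using ⟨hn, hG⟩, by simp, ?_⟩
    have hlt : ∀ m ∈ A + B, 2 ≤ m ∧ G m ∧ m < a + b := by
      intro m hm
      obtain hm | hm := Multiset.mem_add.mp hm
      · exact ⟨(hAG m hm).1, (hAG m hm).2, by have := Multiset.le_sum_of_mem hm; omega⟩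
      · exact ⟨(hBG m hm).1, (hBG m hm).2, by have := Multiset.le_sum_of_mem hm; omega⟩
    have := mul_add_two_le_of_multiset hσ hmin hgap hn hG (A + B) hlt (by simp; omega)
      (k := κ a + κ b) (by simp only [Multiset.card_add, Multiset.sum_add, Nat.cast_add]; linarith)
    rw [heq, if_pos hG]
    simp only [Multiset.card_singleton, Multiset.sum_singleton, Nat.cast_add, Nat.cast_one]
      at this ⊢
    linarith
  · refine ⟨A + B, fun m hm => ?_, by simp; omega, ?_⟩
    · obtain hm | hm := Multiset.mem_add.mp hm
      exacts [hAG m hm, hBG m hm]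
    · rw [heq, if_neg hG]
      simp only [Multiset.card_add, Multiset.sum_add, Nat.cast_add, Nat.cast_zero]
      linarith

theorem mul_indicator_le [DecidablePred G] (hσ : 0 < σ) (hmin : ∀ m, 2 ≤ m → G m → σ ≤ m)
    (hgap : ∀ m m', 2 ≤ m' → m' < m → G m → G m' → σ ≤ (m : ℝ) - m') (n : ℕ) :
    σ * maxTreeWeight (fun m => if G m then 1 else 0) n ≤ 2 * n := by
  obtain ⟨T, -, hsum, hT⟩ := exists_multiset_mul_indicator_le hσ hmin hgap n
  have hsum : (T.sum : ℝ) ≤ n := by exact_mod_cast hsum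
  have : 0 ≤ σ * (Multiset.card T : ℝ) := by positivity
  linarith

end Counting

end maxTreeWeight

/-- `⌊log₂ x⌋` for `x ≥ 1`, and `0` for `x < 1`. -/
noncomputable def dyadicLevel (x : ℝ) : ℕ := Nat.log 2 ⌊x⌋₊

theorem lt_two_pow_dyadicLevel_succ (x : ℝ) : x < 2 ^ (dyadicLevel x + 1) := by
  calc x < ⌊x⌋₊ + 1 := Nat.lt_floor_add_one x
    _ ≤ (2 ^ (dyadicLevel x + 1) : ℕ) := by
      exact_mod_cast Nat.lt_pow_succ_log_self one_lt_two _
    _ = 2 ^ (dyadicLevel x + 1) := by push_cast; rfl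

theorem two_pow_succ_le_of_lt_dyadicLevel {x : ℝ} {t : ℕ} (ht : t < dyadicLevel x) :
    (2 : ℝ) ^ (t + 1) ≤ x := by
  have h0 : ⌊x⌋₊ ≠ 0 := by
    intro h
    simp [dyadicLevel, h] at ht
  calc (2 : ℝ) ^ (t + 1) = (2 ^ (t + 1) : ℕ) := by push_cast; rfl
    _ ≤ ⌊x⌋₊ := by exact_mod_cast Nat.pow_le_of_le_log h0 ht
    _ ≤ x := Nat.floor_le (zero_le_one.trans (Nat.floor_pos.mp (Nat.pos_of_ne_zero h0)))

section SmallDenominators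

variable {ε : ℕ → ℝ} {α : ℝ}

theorem rpow_inv_pow_lt (hα : 0 < α) (hgrow : ∀ l : ℕ, 1 ≤ l → ε l < (2 * (l : ℝ)) ^ α)
    {d t : ℕ} (hd : 1 ≤ d) (h : (2 : ℝ) ^ t ≤ ε d) : ((2 : ℝ) ^ α⁻¹) ^ t < 2 * d := by
  rw [Real.rpow_pow_comm zero_le_two,
    Real.rpow_inv_lt_iff_of_pos (by positivity) (by positivity) hα]
  exact h.trans_lt (hgrow d hd)

theorem two_pow_le_apply_sub (hεpos : ∀ l, 1 ≤ l → 0 < ε l)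
    (hsub : ∀ ν μ : ℕ, 1 ≤ μ → μ < ν → (ε (ν - μ))⁻¹ ≤ (ε ν)⁻¹ + (ε μ)⁻¹)
    {t m m' : ℕ} (hm' : 2 ≤ m') (hlt : m' < m) (h : (2 : ℝ) ^ (t + 1) ≤ ε (m - 1))
    (h' : (2 : ℝ) ^ (t + 1) ≤ ε (m' - 1)) : (2 : ℝ) ^ t ≤ ε (m - m') := by
  have hsub' := hsub (m - 1) (m' - 1) (by omega) (by omega)
  rw [show m - 1 - (m' - 1) = m - m' by omega] at hsub'
  have h2 : (0 : ℝ) < 2 ^ (t + 1) := by positivity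
  have := inv_anti₀ h2 h
  have := inv_anti₀ h2 h'
  rw [← inv_le_inv₀ (hεpos _ (by omega)) (by positivity)]
  calc (ε (m - m'))⁻¹ ≤ 2 * ((2 : ℝ) ^ (t + 1))⁻¹ := by linarith
    _ = ((2 : ℝ) ^ t)⁻¹ := by rw [pow_succ, mul_inv]; ring

/-- Sizes `m` with `2 ^ (t + 1) ≤ ε (m - 1)` are at least `(2 ^ α⁻¹) ^ t / 2`, and as far apart. -/
theorem mul_maxTreeWeight_level_le (hεpos : ∀ l, 1 ≤ l → 0 < ε l) (hα : 0 < α)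
    (hgrow : ∀ l : ℕ, 1 ≤ l → ε l < (2 * (l : ℝ)) ^ α)
    (hsub : ∀ ν μ : ℕ, 1 ≤ μ → μ < ν → (ε (ν - μ))⁻¹ ≤ (ε ν)⁻¹ + (ε μ)⁻¹) (t n : ℕ) :
    ((2 : ℝ) ^ α⁻¹) ^ t / 2 *
      maxTreeWeight (fun m => if t < dyadicLevel (ε (m - 1)) then 1 else 0) n ≤ 2 * n := by
  refine maxTreeWeight.mul_indicator_le (by positivity) (fun m hm hG => ?_)
    (fun m m' hm' hlt hG hG' => ?_) n
  · have h := two_pow_succ_le_of_lt_dyadicLevel hG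
    have := rpow_inv_pow_lt hα hgrow (by omega) ((pow_le_pow_right₀ one_le_two t.le_succ).trans h)
    rw [Nat.cast_sub (by omega)] at this
    push_cast at this
    linarith
  · have := rpow_inv_pow_lt hα hgrow (by omega) (two_pow_le_apply_sub hεpos hsub hm' hlt
      (two_pow_succ_le_of_lt_dyadicLevel hG) (two_pow_succ_le_of_lt_dyadicLevel hG'))
    rw [Nat.cast_sub hlt.le] at this
    linarith

theorem exists_maxTreeWeight_dyadicLevel_le (hεpos : ∀ l, 1 ≤ l → 0 < ε l) (hα : 0 < α)
    (hgrow : ∀ l : ℕ, 1 ≤ l → ε l < (2 * (l : ℝ)) ^ α)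
    (hsub : ∀ ν μ : ℕ, 1 ≤ μ → μ < ν → (ε (ν - μ))⁻¹ ≤ (ε ν)⁻¹ + (ε μ)⁻¹) :
    ∃ K : ℕ, ∀ n, maxTreeWeight (fun m => dyadicLevel (ε (m - 1))) n ≤ K * n := by
  set y : ℝ := (2 : ℝ) ^ α⁻¹
  have hy : 1 < y := Real.one_lt_rpow one_lt_two (inv_pos.mpr hα)
  have hy0 : 0 ≤ y⁻¹ := by positivity
  have hy1 : y⁻¹ < 1 := inv_lt_one_of_one_lt₀ hy
  refine ⟨⌈4 / (1 - y⁻¹)⌉₊, fun n => ?_⟩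
  set L : ℕ → ℕ := fun m => dyadicLevel (ε (m - 1))
  set T := (range (n + 1)).sup L
  have hsplit : maxTreeWeight L n ≤
      ∑ t ∈ range T, maxTreeWeight (fun m => if t < L m then 1 else 0) n := by
    refine maxTreeWeight.le_sum L (range T) _ fun m hm => ?_
    have hLT : L m ≤ T := le_sup (f := L) (mem_range.mpr (by omega))
    have hsub : range (L m) ⊆ (range T).filter (fun t => t < L m) := fun t ht => by
      simp only [mem_range, mem_filter] at ht ⊢
      omega
    rw [sum_boole, Nat.cast_id]
    exact (card_range (L m)).symm.trans_le (card_le_card hsub)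
  have hlevel (t : ℕ) : (maxTreeWeight (fun m => if t < L m then 1 else 0) n : ℝ) ≤
      4 * n * y⁻¹ ^ t := by
    have := mul_maxTreeWeight_level_le hεpos hα hgrow hsub t n
    rw [inv_pow, ← div_eq_mul_inv, le_div_iff₀ (by positivity)]
    linarith
  have hgeom : ∑ t ∈ range T, y⁻¹ ^ t ≤ (1 - y⁻¹)⁻¹ := by
    have := geom_sum_Ico_le_of_lt_one (m := 0) (n := T) hy0 hy1
    rwa [← range_eq_Ico, pow_zero, one_div] at this
  have hK : 4 / (1 - y⁻¹) * n ≤ ⌈4 / (1 - y⁻¹)⌉₊ * n := by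
    gcongr
    exact Nat.le_ceil _
  have : (maxTreeWeight L n : ℝ) ≤ 4 / (1 - y⁻¹) * n := by
    calc (maxTreeWeight L n : ℝ)
        ≤ ∑ t ∈ range T, (maxTreeWeight (fun m => if t < L m then 1 else 0) n : ℝ) := by
          exact_mod_cast hsplit
      _ ≤ ∑ t ∈ range T, 4 * n * y⁻¹ ^ t := sum_le_sum fun t _ => hlevel t
      _ ≤ 4 * n * (1 - y⁻¹)⁻¹ := by
          rw [← mul_sum]
          exact mul_le_mul_of_nonneg_left hgeom (by positivity)
      _ = 4 / (1 - y⁻¹) * n := by ring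
  exact_mod_cast this.trans hK

end SmallDenominators

noncomputable def siegelWeight (f : ℕ → ℕ) (τ : ℝ) (k : ℕ) : ℝ :=
  2 ^ maxTreeWeight f k * τ ^ (k - 1)

namespace siegelWeight

variable (f : ℕ → ℕ) {τ : ℝ}

theorem nonneg (hτ : 0 ≤ τ) (k : ℕ) : 0 ≤ siegelWeight f τ k := by
  unfold siegelWeight; positivity

theorem one : siegelWeight f τ 1 = 1 := by
  simp [siegelWeight, maxTreeWeight.of_le_one]

theorem mul_mul_le {E : ℕ → ℝ} (hE : ∀ n, E n ≤ 2 ^ (f n + 1)) (hτ : 0 < τ) {i j : ℕ}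
    (hi : 1 ≤ i) (hj : 1 ≤ j) :
    8 * E (i + j) * (siegelWeight f τ i * siegelWeight f τ j) ≤
      16 / τ * siegelWeight f τ (i + j) := by
  have hw := maxTreeWeight.add_add_le f hi hj
  have h2 : (2 : ℝ) ^ (f (i + j) + 1) * (2 ^ maxTreeWeight f i * 2 ^ maxTreeWeight f j) ≤
      2 * 2 ^ maxTreeWeight f (i + j) := by
    rw [← pow_add, ← pow_add, ← pow_succ']
    exact pow_le_pow_right₀ one_le_two (by omega)
  have hτ' : τ ^ (i - 1) * τ ^ (j - 1) * τ = τ ^ (i + j - 1) := by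
    rw [← pow_add, ← pow_succ]
    congr 1
    omega
  unfold siegelWeight
  calc 8 * E (i + j) * (2 ^ maxTreeWeight f i * τ ^ (i - 1) * (2 ^ maxTreeWeight f j * τ ^ (j - 1)))
      ≤ 8 * 2 ^ (f (i + j) + 1) *
          (2 ^ maxTreeWeight f i * τ ^ (i - 1) * (2 ^ maxTreeWeight f j * τ ^ (j - 1))) := by
        gcongr
        exact hE _
    _ = 8 * ((2 : ℝ) ^ (f (i + j) + 1) * (2 ^ maxTreeWeight f i * 2 ^ maxTreeWeight f j)) *
          (τ ^ (i - 1) * τ ^ (j - 1)) := by ring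
    _ ≤ 8 * (2 * 2 ^ maxTreeWeight f (i + j)) * (τ ^ (i - 1) * τ ^ (j - 1)) := by gcongr
    _ = 16 / τ * (2 ^ maxTreeWeight f (i + j) * τ ^ (i + j - 1)) := by
        rw [← hτ']
        field_simp
        ring

theorem le_mul_pow {K : ℕ} (hK : ∀ n, maxTreeWeight f n ≤ K * n) (hτ : 0 < τ) {n : ℕ}
    (hn : 1 ≤ n) : siegelWeight f τ n ≤ τ⁻¹ * (2 ^ K * τ) ^ n := by
  obtain ⟨m, rfl⟩ := Nat.exists_eq_add_of_le' hn
  calc siegelWeight f τ (m + 1) ≤ (2 ^ K) ^ (m + 1) * τ ^ m := by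
        unfold siegelWeight
        rw [← pow_mul, Nat.add_sub_cancel]
        gcongr
        · exact one_le_two
        · exact hK _
    _ = τ⁻¹ * (2 ^ K * τ) ^ (m + 1) := by
        field_simp
        ring

end siegelWeight

theorem mul_norm_coeff_pow_le {ε : ℕ → ℝ} {c : ℕ → ℂ} (hc0 : c 0 = 0) {Θ : ℕ → ℝ} {s : ℝ}
    (hs : 0 ≤ s) (hΘ : ∀ k, 0 ≤ Θ k)
    (hΘE : ∀ i j, 1 ≤ i → 1 ≤ j → 8 * max (ε (i + j - 1)) 1 * (Θ i * Θ j) ≤ s * Θ (i + j))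
    {n : ℕ} (hlt : ∀ k < n, ‖c k‖ ≤ Θ k / (k : ℝ) ^ 2) {l : ℕ} (hl : 2 ≤ l) :
    s * (ε (n - 1) * ‖coeff n (mk c ^ l)‖) ≤ s ^ l * (Θ n / (n : ℝ) ^ 2) := by
  obtain ⟨l, rfl⟩ := Nat.exists_eq_add_of_le' hl
  have hcmp : ∀ k < n, ‖coeff k (mk c)‖ ≤ coeff k (invSqWeightSeries Θ) := fun k hk => by
    simpa [invSqWeightSeries] using hlt k hk
  calc s * (ε (n - 1) * ‖coeff n (mk c ^ (l + 2))‖)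
      ≤ s * (max (ε (n - 1)) 1 * coeff n (invSqWeightSeries Θ ^ (l + 2))) := by
        refine mul_le_mul_of_nonneg_left (mul_le_mul (le_max_left _ _) ?_ (norm_nonneg _)
          (zero_le_one.trans (le_max_right _ _))) hs
        exact norm_coeff_pow_add_two_le (coeff_invSqWeightSeries_nonneg hΘ) (by simpa using hc0)
          hcmp l
    _ ≤ s ^ (l + 2) * (Θ n / (n : ℝ) ^ 2) :=
        mul_mul_coeff_invSqWeightSeries_pow_le (E := fun n => max (ε (n - 1)) 1) hΘ hs
          (fun _ => le_max_right _ _) hΘE (by omega) n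

theorem norm_coeff_le_of_recursion {ε : ℕ → ℝ} (hεpos : ∀ l, 1 ≤ l → 0 < ε l) {a c : ℕ → ℂ}
    (ha0 : a 0 = 0) (ha1 : a 1 = 0) (hc0 : c 0 = 0) (hc1 : c 1 = 1)
    (heq : ∀ n : ℕ, 2 ≤ n →
      ((ε (n - 1) : ℂ))⁻¹ * c n = ∑ l ∈ range (n + 1), a l * coeff n (mk c ^ l))
    {Θ : ℕ → ℝ} {s : ℝ} (hs : 0 < s) (hΘ : ∀ k, 0 ≤ Θ k) (hΘ1 : 1 ≤ Θ 1)
    (hΘE : ∀ i j, 1 ≤ i → 1 ≤ j → 8 * max (ε (i + j - 1)) 1 * (Θ i * Θ j) ≤ s * Θ (i + j))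
    (has : ∀ N, ∑ l ∈ range N, ‖a l‖ * s ^ l ≤ s) (n : ℕ) : ‖c n‖ ≤ Θ n / (n : ℝ) ^ 2 := by
  induction n using Nat.strong_induction_on with
  | _ n ih =>
  obtain rfl | rfl | hn : n = 0 ∨ n = 1 ∨ 2 ≤ n := by omega
  · simp [hc0]
  · simpa [hc1] using hΘ1
  have hterm : ∀ l ∈ range (n + 1), ‖a l‖ * (s * (ε (n - 1) * ‖coeff n (mk c ^ l)‖)) ≤
      ‖a l‖ * s ^ l * (Θ n / (n : ℝ) ^ 2) := by
    intro l _
    obtain hl | hl := lt_or_ge l 2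
    · interval_cases l <;> simp [ha0, ha1]
    rw [mul_assoc]
    exact mul_le_mul_of_nonneg_left (mul_norm_coeff_pow_le hc0 hs.le hΘ hΘE ih hl) (norm_nonneg _)
  have hεn := hεpos (n - 1) (by omega)
  have hcn : c n = ε (n - 1) * ∑ l ∈ range (n + 1), a l * coeff n (mk c ^ l) := by
    rw [← heq n hn, mul_inv_cancel_left₀ (by exact_mod_cast hεn.ne')]
  refine le_of_mul_le_mul_left ?_ hs
  calc s * ‖c n‖ ≤ s * (ε (n - 1) * ∑ l ∈ range (n + 1), ‖a l‖ * ‖coeff n (mk c ^ l)‖) := by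
        rw [hcn, norm_mul, Complex.norm_real, Real.norm_of_nonneg hεn.le]
        gcongr
        exact (norm_sum_le _ _).trans (sum_le_sum fun l _ => norm_mul_le _ _)
    _ = ∑ l ∈ range (n + 1), ‖a l‖ * (s * (ε (n - 1) * ‖coeff n (mk c ^ l)‖)) := by
        rw [mul_sum, mul_sum]
        exact sum_congr rfl fun l _ => by ring
    _ ≤ ∑ l ∈ range (n + 1), ‖a l‖ * s ^ l * (Θ n / (n : ℝ) ^ 2) := sum_le_sum hterm
    _ ≤ s * (Θ n / (n : ℝ) ^ 2) := by
        rw [← sum_mul]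
        exact mul_le_mul_of_nonneg_right (has _) (div_nonneg (hΘ n) (sq_nonneg _))

theorem exists_sum_norm_mul_pow_le {E : Type*} [SeminormedAddCommGroup E] {a : ℕ → E}
    (ha0 : a 0 = 0) (ha1 : a 1 = 0) (h : ∃ ρ : ℝ, 0 < ρ ∧ Summable fun n => ‖a n‖ * ρ ^ n) :
    ∃ s : ℝ, 0 < s ∧ ∀ N, ∑ l ∈ range N, ‖a l‖ * s ^ l ≤ s := by
  obtain ⟨ρ, hρ, hsum⟩ := h
  set S := ∑' n, ‖a n‖ * ρ ^ n
  have hS : 0 ≤ S := tsum_nonneg fun n => by positivity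
  set u := ρ / (S + ρ)
  have hu0 : 0 < u := by positivity
  have hu1 : u ≤ 1 := div_le_one_of_le₀ (by linarith) (by positivity)
  have huS : u * S ≤ ρ := by
    rw [div_mul_eq_mul_div, div_le_iff₀ (by positivity)]
    nlinarith
  refine ⟨u * ρ, by positivity, fun N => ?_⟩
  have hterm (l : ℕ) : ‖a l‖ * (u * ρ) ^ l ≤ u ^ 2 * (‖a l‖ * ρ ^ l) := by
    obtain hl | hl := lt_or_ge l 2
    · interval_cases l <;> simp [ha0, ha1]
    have : u ^ l ≤ u ^ 2 := pow_le_pow_of_le_one hu0.le hu1 hl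
    calc ‖a l‖ * (u * ρ) ^ l = u ^ l * (‖a l‖ * ρ ^ l) := by ring
      _ ≤ u ^ 2 * (‖a l‖ * ρ ^ l) := mul_le_mul_of_nonneg_right this (by positivity)
  calc ∑ l ∈ range N, ‖a l‖ * (u * ρ) ^ l ≤ ∑ l ∈ range N, u ^ 2 * (‖a l‖ * ρ ^ l) :=
        sum_le_sum fun l _ => hterm l
    _ ≤ u ^ 2 * S := by
        rw [← mul_sum]
        gcongr
        exact hsum.sum_le_tsum _ fun n _ => by positivity
    _ ≤ u * ρ := by nlinarith

theorem exists_summable_norm_mul_pow {E : Type*} [SeminormedAddCommGroup E] {c : ℕ → E}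
    {D Q : ℝ} (hQ : 0 < Q) (h : ∀ n, ‖c n‖ ≤ D * Q ^ n) :
    ∃ r : ℝ, 0 < r ∧ Summable fun n => ‖c n‖ * r ^ n := by
  refine ⟨(2 * Q)⁻¹, by positivity, ?_⟩
  refine (summable_geometric_two.mul_left D).of_nonneg_of_le (fun n => by positivity) fun n => ?_
  calc ‖c n‖ * (2 * Q)⁻¹ ^ n ≤ D * Q ^ n * (2 * Q)⁻¹ ^ n := by gcongr; exact h n
    _ = D * (1 / 2) ^ n := by
        rw [mul_assoc, ← mul_pow]
        congr 2
        field_simp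

/-- Siegel's small-denominators lemma (Ueda, Lemma 5). -/
theorem siegel_small_denominators
    (ε : ℕ → ℝ) (hεpos : ∀ l, 1 ≤ l → 0 < ε l)
    (α : ℝ) (hα : 0 < α)
    (hgrow : ∀ l : ℕ, 1 ≤ l → ε l < (2 * (l : ℝ)) ^ α)
    (hsub : ∀ ν μ : ℕ, 1 ≤ μ → μ < ν → (ε (ν - μ))⁻¹ ≤ (ε ν)⁻¹ + (ε μ)⁻¹)
    (a : ℕ → ℂ) (ha0 : a 0 = 0) (ha1 : a 1 = 0)
    (hfconv : ∃ ρ : ℝ, 0 < ρ ∧ Summable fun n => ‖a n‖ * ρ ^ n)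
    (c : ℕ → ℂ) (hc0 : c 0 = 0) (hc1 : c 1 = 1)
    (heq : ∀ n : ℕ, 2 ≤ n →
      ((ε (n - 1) : ℂ))⁻¹ * c n
        = ∑ l ∈ Finset.range (n + 1),
            a l * PowerSeries.coeff (R := ℂ) n ((PowerSeries.mk c) ^ l)) :
    ∃ r : ℝ, 0 < r ∧ Summable fun n => ‖c n‖ * r ^ n := by
  obtain ⟨s, hs, has⟩ := exists_sum_norm_mul_pow_le ha0 ha1 hfconv
  obtain ⟨K, hK⟩ := exists_maxTreeWeight_dyadicLevel_le hεpos hα hgrow hsub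
  set L : ℕ → ℕ := fun m => dyadicLevel (ε (m - 1))
  have hτ : 0 < 16 / s := by positivity
  have hE (n : ℕ) : max (ε (n - 1)) 1 ≤ 2 ^ (L n + 1) :=
    max_le (lt_two_pow_dyadicLevel_succ _).le (one_le_pow₀ one_le_two)
  have hc := norm_coeff_le_of_recursion hεpos ha0 ha1 hc0 hc1 heq hs
    (siegelWeight.nonneg L hτ.le) (siegelWeight.one L).ge
    (fun i j hi hj => by
      simpa [div_div_cancel₀ hs.ne'] using siegelWeight.mul_mul_le L hE hτ hi hj) has
  refine exists_summable_norm_mul_pow (D := (16 / s)⁻¹) (Q := 2 ^ K * (16 / s)) (by positivity)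
    fun n => ?_
  obtain rfl | hn := Nat.eq_zero_or_pos n
  · simp only [hc0, norm_zero, pow_zero, mul_one]
    positivity
  calc ‖c n‖ ≤ siegelWeight L (16 / s) n / (n : ℝ) ^ 2 := hc n
    _ ≤ siegelWeight L (16 / s) n :=
        div_le_self (siegelWeight.nonneg L hτ.le n) (one_le_pow₀ (by exact_mod_cast hn))
    _ ≤ (16 / s)⁻¹ * (2 ^ K * (16 / s)) ^ n := siegelWeight.le_mul_pow L hK hτ hn
end

section
/- Fix positive reals $K, M, R$. There is a unique formal power series $A(X,Y) = X + O(X^2)$ in two variables satisfying $A(X,Y) - X = \frac{RK}{1-RY}\left((A(X,Y)-X)\,Y + \frac{(1+MR)\,A(X,Y)^2}{1 - R\,A(X,Y)}\right)$, and all its coefficients $A_{n,m}$ (of $X^n Y^m$) are non-negative real numbers. -/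
/-!
Clearing denominators, the equation reads `(A - X)(1 - rY)(1 - RA) = cA²` with `r = R(1 + K)` and
`c = RK(1 + MR)`, i.e. for `A` without constant term it is the fixed-point equation
`A = Φ A := X + cA² / ((1 - rY)(1 - RA))`. Since `Φ A - Φ B = (A - B) E` with `E` without constant
term, `Φ` raises the order of differences, so it has exactly one fixed point, the degreewise limit
of the iterates `Φⁿ 0`. Each iterate has non-negative coefficients, because `(1 - φ)⁻¹ = ∑ φⁱ`
does when `φ` does, and is divisible by `X`; hence so is the limit `A`, and then
`A - X = cA² / ((1 - rY)(1 - RA))` is divisible by `X²`, which is the normalization `A = X + O(X²)`.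
-/

open MvPowerSeries Finset

namespace MvPowerSeries

section NonnegCoeffs

variable (σ R : Type*) [Semiring R] [PartialOrder R] [IsOrderedRing R]

def nonnegCoeffs : Subsemiring (MvPowerSeries σ R) where
  carrier := {f | ∀ d, 0 ≤ coeff d f}
  zero_mem' d := by simp
  one_mem' d := by classical rw [coeff_one]; split_ifs <;> simp
  add_mem' hf hg d := by rw [map_add]; exact add_nonneg (hf d) (hg d)
  mul_mem' hf hg d := by
    classical rw [coeff_mul]; exact sum_nonneg fun p _ => mul_nonneg (hf _) (hg _)

variable {σ R}

theorem C_mem_nonnegCoeffs {a : R} (ha : 0 ≤ a) : C a ∈ nonnegCoeffs σ R := fun d => by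
  classical rw [coeff_C]; split_ifs <;> simp [ha]

theorem X_mem_nonnegCoeffs (i : σ) : X i ∈ nonnegCoeffs σ R := fun d => by
  classical rw [coeff_X]; split_ifs <;> simp

theorem inv_one_sub_mem_nonnegCoeffs {k : Type*} [Field k] [PartialOrder k] [IsOrderedRing k]
    {φ : MvPowerSeries σ k} (hφ : φ ∈ nonnegCoeffs σ k) (hφ0 : constantCoeff φ = 0) :
    (1 - φ)⁻¹ ∈ nonnegCoeffs σ k := by
  intro d
  set n := d.degree + 1
  have hinv := MvPowerSeries.mul_inv_cancel (1 - φ) (by simp [hφ0])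
  have hgeom := mul_neg_geom_sum φ n
  have htail : (1 - φ)⁻¹ - ∑ i ∈ range n, φ ^ i = φ ^ n * (1 - φ)⁻¹ := by
    linear_combination (∑ i ∈ range n, φ ^ i) * hinv - (1 - φ)⁻¹ * hgeom
  have hcoeff : coeff d (1 - φ)⁻¹ = coeff d (∑ i ∈ range n, φ ^ i) := by
    rw [← sub_eq_zero, ← map_sub, htail]
    refine coeff_of_lt_order ?_
    calc (d.degree : ℕ∞) < n := by exact_mod_cast d.degree.lt_succ_self
      _ ≤ (φ ^ n).order := le_order_pow_of_constantCoeff_eq_zero n hφ0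
      _ ≤ (φ ^ n).order + ((1 - φ)⁻¹).order := le_self_add
      _ ≤ (φ ^ n * (1 - φ)⁻¹).order := le_order_mul
  rw [hcoeff]
  exact sum_mem (fun i _ => pow_mem hφ i) d

end NonnegCoeffs

section OrderLimit

variable {σ R : Type*} [Ring R]

/-- When `n + 1 ≤ order (f (n + 1) - f n)` for all `n`, the coefficients of degree `n` of `f m`
are the same for all `m ≥ n`, so reading them at `m = n` gives the limit of `f`. -/
noncomputable def degreewiseLimit (f : ℕ → MvPowerSeries σ R) : MvPowerSeries σ R :=
  fun d => coeff d (f d.degree)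

theorem coeff_degreewiseLimit (f : ℕ → MvPowerSeries σ R) (d : σ →₀ ℕ) :
    coeff d (degreewiseLimit f) = coeff d (f d.degree) :=
  rfl

theorem constantCoeff_degreewiseLimit (f : ℕ → MvPowerSeries σ R) :
    constantCoeff (degreewiseLimit f) = constantCoeff (f 0) := by
  rw [← coeff_zero_eq_constantCoeff_apply, coeff_degreewiseLimit]
  simp

variable {f : ℕ → MvPowerSeries σ R}

theorem le_order_sub_of_le (hf : ∀ k : ℕ, (k + 1 : ℕ∞) ≤ (f (k + 1) - f k).order) {n m : ℕ}
    (hnm : n ≤ m) : (n + 1 : ℕ∞) ≤ (f m - f n).order := by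
  induction m, hnm using Nat.le_induction with
  | base => simp
  | succ m hnm ih =>
    calc (n + 1 : ℕ∞) ≤ min (f (m + 1) - f m).order (f m - f n).order :=
          le_min ((show (n + 1 : ℕ∞) ≤ m + 1 by gcongr).trans (hf m)) ih
      _ ≤ (f (m + 1) - f n).order := by
          simpa using min_order_le_add (f := f (m + 1) - f m) (g := f m - f n)

theorem le_order_degreewiseLimit_sub (hf : ∀ k : ℕ, (k + 1 : ℕ∞) ≤ (f (k + 1) - f k).order)
    (n : ℕ) : (n + 1 : ℕ∞) ≤ (degreewiseLimit f - f n).order := by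
  refine le_order fun d hd => ?_
  have hdn : d.degree ≤ n := by exact_mod_cast Order.le_of_lt_add_one hd
  have hlt : (d.degree : ℕ∞) < (f n - f d.degree).order :=
    (ENat.lt_add_one_iff (ENat.natCast_ne_top _)).mpr le_rfl |>.trans_le (le_order_sub_of_le hf hdn)
  rw [map_sub, coeff_degreewiseLimit, ← neg_sub, ← map_sub, coeff_of_lt_order hlt, neg_zero]

theorem degreewiseLimit_mem_nonnegCoeffs [PartialOrder R] [IsOrderedRing R]
    (hf : ∀ k, f k ∈ nonnegCoeffs σ R) : degreewiseLimit f ∈ nonnegCoeffs σ R :=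
  fun d => hf d.degree d

theorem X_dvd_degreewiseLimit {s : σ} (hf : ∀ k, X s ∣ f k) : X s ∣ degreewiseLimit f :=
  X_dvd_iff.mpr fun d hd => X_dvd_iff.mp (hf d.degree) d hd

end OrderLimit

section OrderContracting

variable {σ R : Type*} [Ring R] {Φ : MvPowerSeries σ R → MvPowerSeries σ R}

theorem eq_of_order_contracting
    (hΦ : ∀ A B, constantCoeff A = 0 → constantCoeff B = 0 →
      (A - B).order + 1 ≤ (Φ A - Φ B).order)
    {A B : MvPowerSeries σ R} (hA : constantCoeff A = 0) (hB : constantCoeff B = 0)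
    (hΦA : Φ A = A) (hΦB : Φ B = B) : A = B := by
  have h := hΦ A B hA hB
  rw [hΦA, hΦB] at h
  rw [← sub_eq_zero, ← order_eq_top_iff]
  by_contra hne
  exact lt_irrefl _ ((ENat.add_one_le_iff hne).mp h)

variable (hΦ0 : ∀ A, constantCoeff A = 0 → constantCoeff (Φ A) = 0)
  (hΦ : ∀ A B, constantCoeff A = 0 → constantCoeff B = 0 → (A - B).order + 1 ≤ (Φ A - Φ B).order)

include hΦ0

theorem constantCoeff_iterate_zero (k : ℕ) : constantCoeff (Φ^[k] 0) = 0 := by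
  induction k with
  | zero => simp
  | succ k ih => rw [Function.iterate_succ_apply']; exact hΦ0 _ ih

include hΦ

theorem le_order_iterate_succ_sub (k : ℕ) : (k + 1 : ℕ∞) ≤ (Φ^[k + 1] 0 - Φ^[k] 0).order := by
  induction k with
  | zero => simpa using one_le_order_iff_constCoeff_eq_zero.mpr (hΦ0 0 (map_zero _))
  | succ k ih =>
    calc ((k + 1 : ℕ) + 1 : ℕ∞) ≤ (Φ^[k + 1] 0 - Φ^[k] 0).order + 1 := by push_cast; gcongr
      _ ≤ (Φ (Φ^[k + 1] 0) - Φ (Φ^[k] 0)).order :=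
          hΦ _ _ (constantCoeff_iterate_zero hΦ0 _) (constantCoeff_iterate_zero hΦ0 _)
      _ = (Φ^[k + 1 + 1] 0 - Φ^[k + 1] 0).order := by
          rw [Function.iterate_succ_apply' Φ (k + 1), Function.iterate_succ_apply' Φ k]

theorem degreewiseLimit_iterate_isFixedPt :
    Φ (degreewiseLimit fun k => Φ^[k] 0) = degreewiseLimit fun k => Φ^[k] 0 := by
  set L := degreewiseLimit fun k => Φ^[k] 0
  have hL := le_order_degreewiseLimit_sub (f := fun k => Φ^[k] 0)
    (le_order_iterate_succ_sub hΦ0 hΦ)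
  have hL0 : constantCoeff L = 0 := (constantCoeff_degreewiseLimit _).trans (map_zero _)
  rw [← sub_eq_zero, ← order_eq_top_iff, ← top_le_iff]
  refine ENat.forall_natCast_le_iff_le.mp fun n _ => ?_
  have hstep : (n : ℕ∞) ≤ (Φ L - Φ (Φ^[n] 0)).order :=
    le_self_add.trans <| (hL n).trans <| le_self_add.trans <|
      hΦ _ _ hL0 (constantCoeff_iterate_zero hΦ0 n)
  have hnext : (n : ℕ∞) ≤ (Φ (Φ^[n] 0) - L).order := by
    rw [← Function.iterate_succ_apply' Φ n, ← order_neg, neg_sub]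
    calc (n : ℕ∞) ≤ (n + 1 : ℕ) + 1 := by norm_cast; omega
      _ ≤ _ := hL (n + 1)
  calc (n : ℕ∞) ≤ min (Φ L - Φ (Φ^[n] 0)).order (Φ (Φ^[n] 0) - L).order := le_min hstep hnext
    _ ≤ (Φ L - L).order := by
        simpa using min_order_le_add (f := Φ L - Φ (Φ^[n] 0)) (g := Φ (Φ^[n] 0) - L)

end OrderContracting

section MajorantMap

variable {k : Type*} [Field k] {c r ρ : k} {A B : MvPowerSeries (Fin 2) k}

noncomputable def majorantMap (c r ρ : k) (A : MvPowerSeries (Fin 2) k) : MvPowerSeries (Fin 2) k :=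
  X 0 + C c * (1 - C r * X 1)⁻¹ * A ^ 2 * (1 - C ρ * A)⁻¹

theorem constantCoeff_majorantMap (hA : constantCoeff A = 0) :
    constantCoeff (majorantMap c r ρ A) = 0 := by
  simp [majorantMap, hA]

theorem majorantMap_sub_majorantMap (hA : constantCoeff A = 0) (hB : constantCoeff B = 0) :
    majorantMap c r ρ A - majorantMap c r ρ B =
      (A - B) * (C c * (1 - C r * X 1)⁻¹ * (1 - C ρ * A)⁻¹ *
        (A + B + C ρ * B ^ 2 * (1 - C ρ * B)⁻¹)) := by
  have hA' := MvPowerSeries.mul_inv_cancel (1 - C ρ * A) (by simp [hA])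
  have hB' := MvPowerSeries.mul_inv_cancel (1 - C ρ * B) (by simp [hB])
  unfold majorantMap
  linear_combination (C c * (1 - C r * X 1)⁻¹ * B ^ 2) *
    ((1 - C ρ * B)⁻¹ * hA' - (1 - C ρ * A)⁻¹ * hB')

theorem le_order_majorantMap_sub (hA : constantCoeff A = 0) (hB : constantCoeff B = 0) :
    (A - B).order + 1 ≤ (majorantMap c r ρ A - majorantMap c r ρ B).order := by
  rw [majorantMap_sub_majorantMap hA hB]
  refine le_trans ?_ le_order_mul
  gcongr
  exact one_le_order_iff_constCoeff_eq_zero.mpr (by simp [hA, hB])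

theorem X_sq_dvd_majorantMap_sub_X (hA : X 0 ∣ A) : X 0 ^ 2 ∣ majorantMap c r ρ A - X 0 := by
  rw [majorantMap, add_sub_cancel_left, mul_assoc (C c * _), mul_comm (A ^ 2), ← mul_assoc]
  exact dvd_mul_of_dvd_right (pow_dvd_pow_of_dvd hA 2) _

theorem X_dvd_majorantMap (hA : X 0 ∣ A) : X 0 ∣ majorantMap c r ρ A :=
  dvd_sub_self_right.mp <| (dvd_pow_self (X 0 : MvPowerSeries (Fin 2) k) two_ne_zero).trans
    (X_sq_dvd_majorantMap_sub_X hA)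

theorem majorantMap_mem_nonnegCoeffs [PartialOrder k] [IsOrderedRing k] (hc : 0 ≤ c) (hr : 0 ≤ r)
    (hρ : 0 ≤ ρ) (hA : A ∈ nonnegCoeffs (Fin 2) k) (hA0 : constantCoeff A = 0) :
    majorantMap c r ρ A ∈ nonnegCoeffs (Fin 2) k := by
  have hY := mul_mem (C_mem_nonnegCoeffs hr) (X_mem_nonnegCoeffs (σ := Fin 2) 1)
  have hρA := mul_mem (C_mem_nonnegCoeffs hρ) hA
  refine add_mem (X_mem_nonnegCoeffs 0) (mul_mem (mul_mem (mul_mem (C_mem_nonnegCoeffs hc)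
    (inv_one_sub_mem_nonnegCoeffs hY (by simp))) (pow_mem hA 2))
    (inv_one_sub_mem_nonnegCoeffs hρA (by simp [hA0])))

theorem X_dvd_iterate_majorantMap (n : ℕ) : X 0 ∣ (majorantMap c r ρ)^[n] 0 := by
  induction n with
  | zero => exact dvd_zero _
  | succ n ih => rw [Function.iterate_succ_apply']; exact X_dvd_majorantMap ih

theorem iterate_majorantMap_mem_nonnegCoeffs [PartialOrder k] [IsOrderedRing k] (hc : 0 ≤ c)
    (hr : 0 ≤ r) (hρ : 0 ≤ ρ) (n : ℕ) : (majorantMap c r ρ)^[n] 0 ∈ nonnegCoeffs (Fin 2) k := by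
  induction n with
  | zero => exact zero_mem _
  | succ n ih =>
    rw [Function.iterate_succ_apply']
    exact majorantMap_mem_nonnegCoeffs hc hr hρ ih
      (constantCoeff_iterate_zero (fun _ => constantCoeff_majorantMap) n)

theorem majorantMap_eq_self_iff (hA : constantCoeff A = 0) :
    majorantMap c r ρ A = A ↔ (A - X 0) * (1 - C r * X 1) * (1 - C ρ * A) = C c * A ^ 2 := by
  have hY := MvPowerSeries.mul_inv_cancel (1 - C r * X 1 : MvPowerSeries (Fin 2) k) (by simp)
  have hA' := MvPowerSeries.mul_inv_cancel (1 - C ρ * A) (by simp [hA])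
  unfold majorantMap
  constructor <;> intro h
  · linear_combination (-((1 - C r * X 1) * (1 - C ρ * A))) * h +
      C c * A ^ 2 * (1 - C ρ * A) * (1 - C ρ * A)⁻¹ * hY + C c * A ^ 2 * hA'
  · linear_combination (-((1 - C r * X 1)⁻¹ * (1 - C ρ * A)⁻¹)) * h +
      (A - X 0) * (1 - C ρ * A) * (1 - C ρ * A)⁻¹ * hY + (A - X 0) * hA'

theorem majorant_equation_iff (K M R : k) (A : MvPowerSeries (Fin 2) k) :
    (A - X 0) * (1 - C R * X 1) * (1 - C R * A) =
        C (R * K) * ((A - X 0) * X 1 * (1 - C R * A) + C (1 + M * R) * A ^ 2) ↔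
      (A - X 0) * (1 - C (R * (1 + K)) * X 1) * (1 - C R * A) =
        C (R * K * (1 + M * R)) * A ^ 2 := by
  simp only [map_mul, map_add, map_one]
  constructor <;> intro h <;> linear_combination h

theorem coeff_single_of_X_sq_dvd_sub_X (h : X 0 ^ 2 ∣ A - X 0) :
    (∀ m : ℕ, coeff (Finsupp.single 1 m) A = 0) ∧ coeff (Finsupp.single 0 1) A = 1 ∧
      ∀ m : ℕ, 1 ≤ m → coeff (Finsupp.single 0 1 + Finsupp.single 1 m) A = 0 := by
  have hA : ∀ d : Fin 2 →₀ ℕ, d 0 < 2 → coeff d A = coeff d (X 0) := fun d hd =>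
    sub_eq_zero.mp (by simpa using X_pow_dvd_iff.mp h d hd)
  refine ⟨fun m => ?_, ?_, fun m hm => ?_⟩
  · rw [hA _ (by simp), coeff_X, if_neg]
    intro he
    simpa using DFunLike.congr_fun he 0
  · rw [hA _ (by simp), coeff_X, if_pos rfl]
  · rw [hA _ (by simp), coeff_X, if_neg]
    intro he
    have := DFunLike.congr_fun he 1
    simp only [Finsupp.coe_add, Pi.add_apply, Finsupp.single_eq_of_ne one_ne_zero,
      Finsupp.single_eq_same, zero_add] at this
    omega

end MajorantMap

end MvPowerSeries

/-- The two-variable majorant series of equation (13): there is a unique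
formal power series `A(X,Y) = X + O(X²)` with
`A - X = (RK/(1-RY)) ((A-X)Y + (1+MR)A²/(1-RA))` (denominators cleared),
and all its coefficients are non-negative. -/
theorem majorant_series_two_variables (K M R : ℝ) (hK : 0 < K) (hM : 0 < M) (hR : 0 < R) :
    ∃ A : MvPowerSeries (Fin 2) ℝ,
      ((∀ m : ℕ, coeff (R := ℝ) (Finsupp.single 1 m) A = 0) ∧
        coeff (R := ℝ) (Finsupp.single 0 1) A = 1 ∧
        (∀ m : ℕ, 1 ≤ m → coeff (R := ℝ) (Finsupp.single 0 1 + Finsupp.single 1 m) A = 0) ∧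
        (A - X 0) * (1 - C (σ := Fin 2) (R := ℝ) R * X 1) * (1 - C (σ := Fin 2) (R := ℝ) R * A)
          = C (σ := Fin 2) (R := ℝ) (R * K) *
              ((A - X 0) * X 1 * (1 - C (σ := Fin 2) (R := ℝ) R * A)
                + C (σ := Fin 2) (R := ℝ) (1 + M * R) * A ^ 2)) ∧
      (∀ B : MvPowerSeries (Fin 2) ℝ,
        ((∀ m : ℕ, coeff (R := ℝ) (Finsupp.single 1 m) B = 0) ∧
          coeff (R := ℝ) (Finsupp.single 0 1) B = 1 ∧
          (∀ m : ℕ, 1 ≤ m → coeff (R := ℝ) (Finsupp.single 0 1 + Finsupp.single 1 m) B = 0) ∧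
          (B - X 0) * (1 - C (σ := Fin 2) (R := ℝ) R * X 1) * (1 - C (σ := Fin 2) (R := ℝ) R * B)
            = C (σ := Fin 2) (R := ℝ) (R * K) *
                ((B - X 0) * X 1 * (1 - C (σ := Fin 2) (R := ℝ) R * B)
                  + C (σ := Fin 2) (R := ℝ) (1 + M * R) * B ^ 2)) → B = A) ∧
      (∀ d : Fin 2 →₀ ℕ, 0 ≤ coeff (R := ℝ) d A) := by
  set Φ := majorantMap (R * K * (1 + M * R)) (R * (1 + K)) R
  have hΦ0 : ∀ A, constantCoeff A = 0 → constantCoeff (Φ A) = 0 :=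
    fun _ => constantCoeff_majorantMap
  have hΦ : ∀ A B, constantCoeff A = 0 → constantCoeff B = 0 →
      (A - B).order + 1 ≤ (Φ A - Φ B).order := fun _ _ => le_order_majorantMap_sub
  have hsolves : ∀ B, constantCoeff B = 0 → (_ ↔ Φ B = B) := fun B hB =>
    (majorant_equation_iff K M R B).trans (majorantMap_eq_self_iff hB).symm
  set A := degreewiseLimit fun k => Φ^[k] 0
  have hA0 : constantCoeff A = 0 := (constantCoeff_degreewiseLimit _).trans (map_zero _)
  have hfix : Φ A = A := degreewiseLimit_iterate_isFixedPt hΦ0 hΦ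
  have hXA : X 0 ^ 2 ∣ A - X 0 :=
    hfix ▸ X_sq_dvd_majorantMap_sub_X (X_dvd_degreewiseLimit X_dvd_iterate_majorantMap)
  obtain ⟨hY, hX, hXY⟩ := coeff_single_of_X_sq_dvd_sub_X hXA
  refine ⟨A, ⟨hY, hX, hXY, (hsolves A hA0).mpr hfix⟩, ?_, degreewiseLimit_mem_nonnegCoeffs
    (iterate_majorantMap_mem_nonnegCoeffs (by positivity) (by positivity) hR.le)⟩
  rintro B ⟨hBY, -, -, hB⟩
  have hB0 : constantCoeff B = 0 := by simpa using hBY 0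
  exact eq_of_order_contracting hΦ hB0 hA0 ((hsolves B hB0).mp hB) hfix
end

section
/- Let $\{\varepsilon_n\}_{n\geq 1}$ be positive reals with $\varepsilon_\lambda < (2\lambda)^\alpha$ for some $\alpha>0$ and all $\lambda$, and $\varepsilon_{\nu-\mu}^{-1} \leq \varepsilon_\nu^{-1}+\varepsilon_\mu^{-1}$ for $\nu>\mu$. Fix $K,R>0$. Let $B(X) = X + \sum_{n\geq 2} B_n X^n$ be the formal power series determined by $\sum_{n=2}^\infty \varepsilon_{n-1}^{-1} B_n X^n = \frac{2K\,B(X)^2}{(1-R\,B(X))^2}$. Then all $B_n$ are non-negative and $B(X)$ has a positive radius of convergence. -/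
/-!
Put `W = B / (1 - R B)`. Then `B_n = ε_{n-1} · 2K · (W²)_n` for `n ≥ 2` and `W = B + R B W`,
so by induction `B_n ≤ δ_n h_n` and `W_n ≤ 2 δ_n h_n`. Here `h_n = c^{n-1} / n²`
(`majorantCoeff`) is a majorant free of small divisors (its self-convolution is at most
`(8 / c) h_n`), and `δ_n` (`maxTreeProd`) is Siegel's maximum, over binary trees with `n` leaves,
of the product of `max 1 ε_{m-1}` over the internal nodes of weight `m`.

With `β = 2^α`, call a node `s`-heavy when its factor exceeds `2 β^{s+1}`. The growth bound makes
`s`-heavy weights exceed `2^s`, and the subadditivity of `ε⁻¹` makes distinct `s`-heavy weights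
differ by more than `2^s`. Hence a tree with `n` leaves has at most `2n / 2^s` heavy nodes at
scale `s`, at most `4n` heavy pairs (node, scale) in all, and `δ_n ≤ (2β)^n β^{4n}`.
-/

open Finset

namespace BinaryTree

variable {α : Type*}

def nodeProd (e : ℕ → ℝ) : BinaryTree α → ℝ
  | nil => 1
  | node _ l r => e (l.numLeaves + r.numLeaves) * (l.nodeProd e * r.nodeProd e)

theorem one_le_nodeProd {e : ℕ → ℝ} (he : ∀ m, 1 ≤ e m) (t : BinaryTree α) :
    1 ≤ t.nodeProd e := by
  induction t with
  | nil => simp [nodeProd]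
  | node _ l r ihl ihr =>
    simp only [nodeProd]
    exact one_le_mul_of_one_le_of_one_le (he _) (one_le_mul_of_one_le_of_one_le ihl ihr)

theorem treesOfNumNodesEq_nonempty : ∀ n, (treesOfNumNodesEq n).Nonempty
  | 0 => ⟨nil, by simp⟩
  | n + 1 =>
    have ⟨t, ht⟩ := treesOfNumNodesEq_nonempty n
    ⟨node () nil t, by simp_all⟩

section Heavy

variable (p : ℕ → Prop) [DecidablePred p]

def heavyCount : BinaryTree α → ℕ
  | nil => 0
  | node _ l r => l.heavyCount + r.heavyCount + if p (l.numLeaves + r.numLeaves) then 1 else 0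

def topCount : BinaryTree α → ℕ
  | nil => 0
  | node _ l r => if p (l.numLeaves + r.numLeaves) then 1 else l.topCount + r.topCount

def topWeight : BinaryTree α → ℕ
  | nil => 0
  | node _ l r =>
    if p (l.numLeaves + r.numLeaves) then l.numLeaves + r.numLeaves
    else l.topWeight + r.topWeight

variable {p} {q : ℕ} (hbig : ∀ m, 2 ≤ m → p m → q < m)
  (hsep : ∀ a b, 2 ≤ a → a < b → p a → p b → a + q < b)
include hbig hsep

-- Each heavy node is charged `q`, paid for by the weight of the maximal heavy node above it.
theorem heavyCount_invariant (t : BinaryTree α) :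
    (t.topCount p = 0 → t.heavyCount p = 0 ∧ t.topWeight p = 0) ∧
    (t.topCount p = 1 → 2 ≤ t.topWeight p ∧ p (t.topWeight p)) ∧
    t.topWeight p ≤ t.numLeaves ∧
    q * (t.heavyCount p + t.topCount p) ≤ 2 * t.topWeight p := by
  induction t with
  | nil => simp [heavyCount, topCount, topWeight]
  | node _ l r ihl ihr =>
    obtain ⟨hl0, hl1, hlw, hlq⟩ := ihl
    obtain ⟨hr0, hr1, hrw, hrq⟩ := ihr
    have := l.numLeaves_pos
    have := r.numLeaves_pos
    simp only [heavyCount, topCount, topWeight, numLeaves]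
    by_cases hw : p (l.numLeaves + r.numLeaves)
    · simp only [if_pos hw]
      refine ⟨by omega, fun _ => ⟨by omega, hw⟩, le_rfl, ?_⟩
      obtain h0 | ⟨hl, hr⟩ | ⟨hl, hr⟩ | h2 : l.topCount p + r.topCount p = 0 ∨
          (l.topCount p = 1 ∧ r.topCount p = 0) ∨ (l.topCount p = 0 ∧ r.topCount p = 1) ∨
          2 ≤ l.topCount p + r.topCount p := by omega
      · rw [(hl0 (by omega)).1, (hr0 (by omega)).1]
        have := hbig _ (by omega) hw
        omega
      · obtain ⟨h2, hpl⟩ := hl1 hl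
        have := hsep _ _ h2 (by omega) hpl hw
        rw [hl] at hlq
        rw [(hr0 hr).1]
        nlinarith
      · obtain ⟨h2, hpr⟩ := hr1 hr
        have := hsep _ _ h2 (by omega) hpr hw
        rw [hr] at hrq
        rw [(hl0 hl).1]
        nlinarith
      · nlinarith
    · simp only [if_neg hw]
      refine ⟨fun h => ?_, fun h => ?_, by omega, by linarith⟩
      · obtain ⟨h1, h2⟩ := hl0 (by omega)
        obtain ⟨h3, h4⟩ := hr0 (by omega)
        omega
      · obtain ⟨hl, hr⟩ | ⟨hl, hr⟩ : (l.topCount p = 1 ∧ r.topCount p = 0) ∨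
            (l.topCount p = 0 ∧ r.topCount p = 1) := by omega
        · rw [(hr0 hr).2, add_zero]; exact hl1 hl
        · rw [(hl0 hl).2, zero_add]; exact hr1 hr

theorem mul_heavyCount_le (t : BinaryTree α) : q * t.heavyCount p ≤ 2 * t.numLeaves := by
  obtain ⟨-, -, hw, hq⟩ := heavyCount_invariant hbig hsep t
  nlinarith

end Heavy

end BinaryTree

open BinaryTree

noncomputable def maxTreeProd (e : ℕ → ℝ) (n : ℕ) : ℝ :=
  (treesOfNumNodesEq (n - 1)).sup' (treesOfNumNodesEq_nonempty _) (nodeProd e)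

section MaxTreeProd

variable {e : ℕ → ℝ}

theorem nodeProd_le_maxTreeProd (t : BinaryTree Unit) :
    t.nodeProd e ≤ maxTreeProd e t.numLeaves :=
  le_sup' _ (by simp [numLeaves_eq_numNodes_succ])

theorem exists_nodeProd_eq_maxTreeProd {n : ℕ} (hn : 1 ≤ n) :
    ∃ t : BinaryTree Unit, t.numLeaves = n ∧ t.nodeProd e = maxTreeProd e n := by
  obtain ⟨t, ht, heq⟩ := exists_mem_eq_sup' (treesOfNumNodesEq_nonempty (n - 1)) (nodeProd e)
  exact ⟨t, by simp_all [numLeaves_eq_numNodes_succ], heq.symm⟩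

theorem mul_maxTreeProd_le {i j : ℕ} (hi : 1 ≤ i) (hj : 1 ≤ j) :
    e (i + j) * (maxTreeProd e i * maxTreeProd e j) ≤ maxTreeProd e (i + j) := by
  obtain ⟨l, rfl, hl⟩ := exists_nodeProd_eq_maxTreeProd (e := e) hi
  obtain ⟨r, rfl, hr⟩ := exists_nodeProd_eq_maxTreeProd (e := e) hj
  rw [← hl, ← hr]
  exact nodeProd_le_maxTreeProd (node () l r)

theorem one_le_maxTreeProd (he : ∀ m, 1 ≤ e m) (n : ℕ) : 1 ≤ maxTreeProd e n :=
  have ⟨t, ht⟩ := treesOfNumNodesEq_nonempty (n - 1)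
  le_sup'_of_le _ ht (one_le_nodeProd he t)

theorem maxTreeProd_mul_le (he : ∀ m, 1 ≤ e m) {i j : ℕ} (hi : 1 ≤ i) (hj : 1 ≤ j) :
    maxTreeProd e i * maxTreeProd e j ≤ maxTreeProd e (i + j) := by
  have := one_le_maxTreeProd he i
  have := one_le_maxTreeProd he j
  exact (le_mul_of_one_le_left (by positivity) (he _)).trans (mul_maxTreeProd_le hi hj)

theorem maxTreeProd_le_pow {D : ℝ} (hD : ∀ t : BinaryTree Unit, t.nodeProd e ≤ D ^ t.numLeaves)
    {n : ℕ} (hn : 1 ≤ n) : maxTreeProd e n ≤ D ^ n :=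
  sup'_le _ _ fun t ht => by
    simpa [numLeaves_eq_numNodes_succ, (mem_treesOfNumNodesEq.mp ht), Nat.sub_add_cancel hn]
      using hD t

end MaxTreeProd

noncomputable def divisorWeight (ε : ℕ → ℝ) (m : ℕ) : ℝ := max 1 (ε (m - 1))

theorem one_le_divisorWeight (ε : ℕ → ℝ) (m : ℕ) : 1 ≤ divisorWeight ε m := le_max_left _ _

theorem le_divisorWeight (ε : ℕ → ℝ) (m : ℕ) : ε (m - 1) ≤ divisorWeight ε m := le_max_right _ _

section Siegel

variable {ε : ℕ → ℝ} {β : ℝ} (hβ : 1 ≤ β)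
  (hgrow : ∀ s l : ℕ, 1 ≤ l → l ≤ 2 ^ s → ε l < β ^ (s + 1))
include hβ hgrow

theorem two_pow_lt_of_lt_divisorWeight {s m : ℕ} (hm : 2 ≤ m)
    (h : 2 * β ^ (s + 1) < divisorWeight ε m) : 2 ^ s < m := by
  by_contra! hle
  have hβs : 1 ≤ β ^ (s + 1) := one_le_pow₀ hβ
  have := hgrow s (m - 1) (by omega) (by omega)
  exact h.not_ge (max_le (by linarith) (by linarith))

theorem divisorWeight_le {S m : ℕ} (hm : 2 ≤ m) (hmS : m ≤ 2 ^ S) :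
    divisorWeight ε m ≤
      2 * β * β ^ #{s ∈ range S | 2 * β ^ (s + 1) < divisorWeight ε m} := by
  set c := #{s ∈ range S | 2 * β ^ (s + 1) < divisorWeight ε m}
  -- the scales at which `m` is heavy form an initial segment of `range S`
  suffices ¬ 2 * β ^ (c + 1) < divisorWeight ε m by
    rw [mul_assoc, ← pow_succ']; exact not_lt.mp this
  intro hc
  have hsub : range (c + 1) ⊆ {s ∈ range S | 2 * β ^ (s + 1) < divisorWeight ε m} := by
    intro s hs
    have hs' : s + 1 ≤ c + 1 := by simp at hs; omega
    have hheavy : 2 * β ^ (s + 1) < divisorWeight ε m := lt_of_le_of_lt (by gcongr) hc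
    have := two_pow_lt_of_lt_divisorWeight hβ hgrow hm hheavy
    simp only [mem_filter, mem_range]
    exact ⟨(Nat.pow_lt_pow_iff_right (by norm_num)).mp (this.trans_le hmS), hheavy⟩
  exact (card_le_card hsub).not_gt (by rw [card_range]; exact Nat.lt_succ_self c)

theorem nodeProd_divisorWeight_le {α : Type*} {S : ℕ} (t : BinaryTree α)
    (ht : t.numLeaves ≤ 2 ^ S) :
    t.nodeProd (divisorWeight ε) ≤ (2 * β) ^ t.numNodes *
      β ^ ∑ s ∈ range S, t.heavyCount (2 * β ^ (s + 1) < divisorWeight ε ·) := by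
  induction t with
  | nil => simp [nodeProd, heavyCount]
  | node _ l r ihl ihr =>
    have := l.numLeaves_pos
    have := r.numLeaves_pos
    simp only [numLeaves] at ht
    have he := divisorWeight_le hβ hgrow (m := l.numLeaves + r.numLeaves) (by omega) ht
    have hl := one_le_nodeProd (one_le_divisorWeight ε) l
    have hr := one_le_nodeProd (one_le_divisorWeight ε) r
    have hβ0 : 0 ≤ β := by linarith
    rw [nodeProd]
    refine (mul_le_mul he (mul_le_mul (ihl (by omega)) (ihr (by omega)) (by linarith)
      (by positivity)) (by positivity) (by positivity)).trans_eq ?_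
    simp only [heavyCount, numNodes, sum_add_distrib, card_filter]
    ring

variable (hε : ∀ n, 1 ≤ n → 0 < ε n)
  (hsub : ∀ ν μ : ℕ, 1 ≤ μ → μ < ν → (ε (ν - μ))⁻¹ ≤ (ε ν)⁻¹ + (ε μ)⁻¹)
include hε hsub

theorem add_two_pow_lt_of_lt_divisorWeight {s a b : ℕ} (ha : 2 ≤ a) (hab : a < b)
    (hpa : 2 * β ^ (s + 1) < divisorWeight ε a) (hpb : 2 * β ^ (s + 1) < divisorWeight ε b) :
    a + 2 ^ s < b := by
  by_contra! hle
  have hθ : 1 ≤ β ^ (s + 1) := one_le_pow₀ hβ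
  have hεa : 2 * β ^ (s + 1) < ε (a - 1) := (lt_max_iff.mp hpa).resolve_left (by linarith)
  have hεb : 2 * β ^ (s + 1) < ε (b - 1) := (lt_max_iff.mp hpb).resolve_left (by linarith)
  have hgap := hgrow s (b - a) (by omega) (by omega)
  have hgap0 := hε (b - a) (by omega)
  have h := hsub (b - 1) (a - 1) (by omega) (by omega)
  rw [show b - 1 - (a - 1) = b - a by omega] at h
  have h1 : (β ^ (s + 1))⁻¹ < (ε (b - a))⁻¹ := inv_strictAnti₀ hgap0 hgap
  have h2 : (ε (b - 1))⁻¹ < (2 * β ^ (s + 1))⁻¹ := inv_strictAnti₀ (by positivity) hεb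
  have h3 : (ε (a - 1))⁻¹ < (2 * β ^ (s + 1))⁻¹ := inv_strictAnti₀ (by positivity) hεa
  rw [mul_inv] at h2 h3
  linarith

theorem sum_heavyCount_le {α : Type*} (S : ℕ) (t : BinaryTree α) :
    ∑ s ∈ range S, t.heavyCount (2 * β ^ (s + 1) < divisorWeight ε ·) ≤ 4 * t.numLeaves := by
  have h (s : ℕ) :
      (t.heavyCount (2 * β ^ (s + 1) < divisorWeight ε ·) : ℝ) ≤ 2 * t.numLeaves * (1 / 2) ^ s := by
    have := mul_heavyCount_le (q := 2 ^ s)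
      (fun _ hm hp => two_pow_lt_of_lt_divisorWeight hβ hgrow hm hp)
      (fun _ _ ha hab => add_two_pow_lt_of_lt_divisorWeight hβ hgrow hε hsub ha hab) t
    rw [one_div, inv_pow, ← div_eq_mul_inv, le_div_iff₀ (by positivity), mul_comm]
    exact_mod_cast this
  have hsum := sum_le_sum fun s (_ : s ∈ range S) => h s
  rw [← mul_sum] at hsum
  have hgeom := sum_geometric_two_le S
  have : (∑ s ∈ range S, t.heavyCount (2 * β ^ (s + 1) < divisorWeight ε ·) : ℝ) ≤
      4 * t.numLeaves := by
    nlinarith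
  exact_mod_cast this

theorem nodeProd_divisorWeight_le_pow {α : Type*} (t : BinaryTree α) :
    t.nodeProd (divisorWeight ε) ≤ (2 * β ^ 5) ^ t.numLeaves := by
  calc t.nodeProd (divisorWeight ε)
      ≤ (2 * β) ^ t.numNodes *
          β ^ ∑ s ∈ range t.numLeaves, t.heavyCount (2 * β ^ (s + 1) < divisorWeight ε ·) :=
        nodeProd_divisorWeight_le hβ hgrow t Nat.lt_two_pow_self.le
    _ ≤ (2 * β) ^ t.numLeaves * β ^ (4 * t.numLeaves) := by
        gcongr
        · linarith
        · simp [numLeaves_eq_numNodes_succ]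
        · exact sum_heavyCount_le hβ hgrow hε hsub _ t
    _ = (2 * β ^ 5) ^ t.numLeaves := by ring

end Siegel

-- The terms with `i = 0` or `j = 0` are `0⁻¹ = 0`.
theorem sum_antidiagonal_inv_sq_mul_sq_le (n : ℕ) :
    ∑ p ∈ antidiagonal n, ((p.1 : ℝ) ^ 2 * (p.2 : ℝ) ^ 2)⁻¹ ≤ 8 / (n : ℝ) ^ 2 := by
  -- `n² = (i + j)² ≤ 2 (i² + j²)` splits each term, and `∑ 1 / i² ≤ 2`
  have hterm : ∀ p ∈ antidiagonal n, ((p.1 : ℝ) ^ 2 * (p.2 : ℝ) ^ 2)⁻¹ ≤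
      2 / (n : ℝ) ^ 2 * (((p.1 : ℝ) ^ 2)⁻¹ + ((p.2 : ℝ) ^ 2)⁻¹) := by
    rintro ⟨i, j⟩ hij
    rw [HasAntidiagonal.mem_antidiagonal] at hij
    subst hij
    rcases Nat.eq_zero_or_pos i with rfl | hi
    · simp; positivity
    rcases Nat.eq_zero_or_pos j with rfl | hj
    · simp; positivity
    have hi' : (0 : ℝ) < i := by exact_mod_cast hi
    have hj' : (0 : ℝ) < j := by exact_mod_cast hj
    push_cast
    rw [div_mul_eq_mul_div, le_div_iff₀ (by positivity)]
    field_simp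
    nlinarith [sq_nonneg ((i : ℝ) - j)]
  have hsq : ∑ i ∈ range (n + 1), ((i : ℝ) ^ 2)⁻¹ ≤ 2 := by
    have := sum_Ioo_inv_sq_le (α := ℝ) 0 (n + 1)
    rw [range_eq_Ico, sum_eq_sum_Ico_succ_bot (by omega),
      show Ico 1 (n + 1) = Ioo 0 (n + 1) from Ico_add_one_left_eq_Ioo 0 (n + 1)]
    simpa using this
  calc ∑ p ∈ antidiagonal n, ((p.1 : ℝ) ^ 2 * (p.2 : ℝ) ^ 2)⁻¹
      ≤ ∑ p ∈ antidiagonal n, 2 / (n : ℝ) ^ 2 * (((p.1 : ℝ) ^ 2)⁻¹ + ((p.2 : ℝ) ^ 2)⁻¹) :=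
        sum_le_sum hterm
    _ = 2 / (n : ℝ) ^ 2 * (2 * ∑ i ∈ range (n + 1), ((i : ℝ) ^ 2)⁻¹) := by
        have hswap : ∑ p ∈ antidiagonal n, ((p.2 : ℝ) ^ 2)⁻¹ =
            ∑ p ∈ antidiagonal n, ((p.1 : ℝ) ^ 2)⁻¹ := by
          rw [← Nat.sum_antidiagonal_swap]; simp
        rw [← mul_sum, sum_add_distrib, hswap, Nat.sum_antidiagonal_eq_sum_range_succ_mk]
        ring
    _ ≤ 2 / (n : ℝ) ^ 2 * (2 * 2) := by gcongr
    _ = 8 / (n : ℝ) ^ 2 := by ring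

noncomputable def majorantCoeff (c : ℝ) (n : ℕ) : ℝ := c ^ (n - 1) / (n : ℝ) ^ 2

section Majorant

variable {c : ℝ}

@[simp] theorem majorantCoeff_zero : majorantCoeff c 0 = 0 := by simp [majorantCoeff]

@[simp] theorem majorantCoeff_one : majorantCoeff c 1 = 1 := by simp [majorantCoeff]

theorem majorantCoeff_nonneg (hc : 0 ≤ c) (n : ℕ) : 0 ≤ majorantCoeff c n := by
  unfold majorantCoeff; positivity

theorem majorantCoeff_le_pow (hc : 1 ≤ c) (n : ℕ) : majorantCoeff c n ≤ c ^ n := by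
  rcases Nat.eq_zero_or_pos n with rfl | hn
  · simp
  have : (1 : ℝ) ≤ (n : ℝ) ^ 2 := one_le_pow₀ (by exact_mod_cast hn)
  calc majorantCoeff c n ≤ c ^ (n - 1) := div_le_self (by positivity) this
    _ ≤ c ^ n := pow_le_pow_right₀ hc (by omega)

theorem sum_antidiagonal_majorantCoeff_mul_le (hc : 0 < c) (n : ℕ) :
    ∑ p ∈ antidiagonal n, majorantCoeff c p.1 * majorantCoeff c p.2 ≤
      8 / c * majorantCoeff c n := by
  rcases Nat.lt_or_ge n 2 with hn | hn
  · interval_cases n <;> simp [Nat.sum_antidiagonal_succ, hc.le, div_nonneg]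
  calc ∑ p ∈ antidiagonal n, majorantCoeff c p.1 * majorantCoeff c p.2
      = c ^ (n - 2) * ∑ p ∈ antidiagonal n, ((p.1 : ℝ) ^ 2 * (p.2 : ℝ) ^ 2)⁻¹ := by
        rw [mul_sum]
        refine sum_congr rfl fun ⟨i, j⟩ hij => ?_
        rw [HasAntidiagonal.mem_antidiagonal] at hij
        rcases Nat.eq_zero_or_pos i with rfl | hi
        · simp
        rcases Nat.eq_zero_or_pos j with rfl | hj
        · simp
        simp only [majorantCoeff]
        rw [show n - 2 = (i - 1) + (j - 1) by omega, pow_add]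
        field_simp
    _ ≤ c ^ (n - 2) * (8 / (n : ℝ) ^ 2) := by
        gcongr; exact sum_antidiagonal_inv_sq_mul_sq_le n
    _ = 8 / c * majorantCoeff c n := by
        rw [majorantCoeff, show n - 1 = n - 2 + 1 by omega, pow_succ]
        field_simp
        ring

end Majorant

section Convolution

variable {T x y f g : ℕ → ℝ} {n : ℕ}

theorem sum_antidiagonal_mul_nonneg (hx0 : x 0 = 0) (hy0 : y 0 = 0)
    (hx : ∀ i < n, 0 ≤ x i) (hy : ∀ j < n, 0 ≤ y j) :
    0 ≤ ∑ p ∈ antidiagonal n, x p.1 * y p.2 := by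
  refine sum_nonneg fun ⟨i, j⟩ hij => ?_
  rw [HasAntidiagonal.mem_antidiagonal] at hij
  rcases Nat.eq_zero_or_pos i with rfl | hi
  · simp [hx0]
  rcases Nat.eq_zero_or_pos j with rfl | hj
  · simp [hy0]
  exact mul_nonneg (hx i (by omega)) (hy j (by omega))

theorem mul_sum_antidiagonal_le {a : ℝ} (ha : 0 ≤ a)
    (hT : ∀ i j, 1 ≤ i → 1 ≤ j → i + j = n → a * (T i * T j) ≤ T n) (hTn : 0 ≤ T n)
    (hf : ∀ i, 0 ≤ f i) (hg : ∀ j, 0 ≤ g j) (hx0 : x 0 = 0) (hy0 : y 0 = 0)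
    (hx : ∀ i < n, 0 ≤ x i ∧ x i ≤ T i * f i) (hy : ∀ j < n, 0 ≤ y j ∧ y j ≤ T j * g j) :
    a * ∑ p ∈ antidiagonal n, x p.1 * y p.2 ≤ T n * ∑ p ∈ antidiagonal n, f p.1 * g p.2 := by
  rw [mul_sum, mul_sum]
  refine sum_le_sum fun ⟨i, j⟩ hij => ?_
  rw [HasAntidiagonal.mem_antidiagonal] at hij
  have hfg : 0 ≤ f i * g j := mul_nonneg (hf i) (hg j)
  rcases Nat.eq_zero_or_pos i with rfl | hi
  · simpa [hx0] using mul_nonneg hTn hfg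
  rcases Nat.eq_zero_or_pos j with rfl | hj
  · simpa [hy0] using mul_nonneg hTn hfg
  obtain ⟨hxi0, hxi⟩ := hx i (by omega)
  obtain ⟨hyj0, hyj⟩ := hy j (by omega)
  calc a * (x i * y j) ≤ a * ((T i * f i) * (T j * g j)) := by
        gcongr; exact hxi0.trans hxi
    _ = a * (T i * T j) * (f i * g j) := by ring
    _ ≤ T n * (f i * g j) := by gcongr; exact hT i j hi hj hij

end Convolution

section MajorantBound

variable {ε b w : ℕ → ℝ} {K R c : ℝ} {n : ℕ}

theorem eps_mul_sum_antidiagonal_le_maxTreeProd_mul (hε : ∀ n, 1 ≤ n → 0 < ε n) (hK : 0 ≤ K)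
    (hc : 0 < c) (hcK : 64 * K ≤ c) (hn : 2 ≤ n) (hw0 : w 0 = 0)
    (hw : ∀ i < n, 0 ≤ w i ∧ w i ≤ maxTreeProd (divisorWeight ε) i * (2 * majorantCoeff c i)) :
    ε (n - 1) * (2 * K * ∑ p ∈ antidiagonal n, w p.1 * w p.2) ≤
      maxTreeProd (divisorWeight ε) n * majorantCoeff c n := by
  set T := maxTreeProd (divisorWeight ε)
  set h := majorantCoeff c
  have hT (m : ℕ) : 0 ≤ T m := zero_le_one.trans (one_le_maxTreeProd (one_le_divisorWeight ε) m)
  have hh (m : ℕ) : 0 ≤ h m := majorantCoeff_nonneg hc.le m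
  have hnode (i j : ℕ) (hi : 1 ≤ i) (hj : 1 ≤ j) (hij : i + j = n) :
      ε (n - 1) * (T i * T j) ≤ T n := by
    subst hij
    exact (mul_le_mul_of_nonneg_right (le_divisorWeight ε _) (mul_nonneg (hT i) (hT j))).trans
      (mul_maxTreeProd_le hi hj)
  have hconv := mul_sum_antidiagonal_le (f := fun i => 2 * h i) (g := fun i => 2 * h i)
    (hε _ (by omega)).le hnode (hT n) (fun i => by simp [hh]) (fun i => by simp [hh]) hw0 hw0 hw hw
  calc ε (n - 1) * (2 * K * ∑ p ∈ antidiagonal n, w p.1 * w p.2)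
      = 2 * K * (ε (n - 1) * ∑ p ∈ antidiagonal n, w p.1 * w p.2) := by ring
    _ ≤ 2 * K * (T n * ∑ p ∈ antidiagonal n, 2 * h p.1 * (2 * h p.2)) := by gcongr
    _ = 8 * K * T n * ∑ p ∈ antidiagonal n, h p.1 * h p.2 := by
      simp only [mul_sum]; exact sum_congr rfl fun _ _ => by ring
    _ ≤ 8 * K * T n * (8 / c * h n) :=
      mul_le_mul_of_nonneg_left (sum_antidiagonal_majorantCoeff_mul_le hc n)
        (mul_nonneg (by positivity) (hT n))
    _ = 64 * K / c * (T n * h n) := by ring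
    _ ≤ T n * h n := mul_le_of_le_one_left (mul_nonneg (hT n) (hh n)) ((div_le_one hc).mpr hcK)

theorem add_mul_sum_antidiagonal_le_maxTreeProd_mul {e : ℕ → ℝ} (he : ∀ m, 1 ≤ e m) (hR : 0 ≤ R)
    (hc : 0 < c) (hcR : 16 * R ≤ c) (hb0 : b 0 = 0) (hw0 : w 0 = 0)
    (hbn : b n ≤ maxTreeProd e n * majorantCoeff c n)
    (hb : ∀ i < n, 0 ≤ b i ∧ b i ≤ maxTreeProd e i * majorantCoeff c i)
    (hw : ∀ i < n, 0 ≤ w i ∧ w i ≤ maxTreeProd e i * (2 * majorantCoeff c i)) :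
    b n + R * ∑ p ∈ antidiagonal n, b p.1 * w p.2 ≤ maxTreeProd e n * (2 * majorantCoeff c n) := by
  set T := maxTreeProd e
  set h := majorantCoeff c
  have hT (m : ℕ) : 0 ≤ T m := zero_le_one.trans (one_le_maxTreeProd he m)
  have hh (m : ℕ) : 0 ≤ h m := majorantCoeff_nonneg hc.le m
  have hconv := mul_sum_antidiagonal_le (f := h) (g := fun i => 2 * h i) zero_le_one
    (fun i j hi hj hij => hij ▸ (one_mul (T i * T j)).trans_le (maxTreeProd_mul_le he hi hj))
    (hT n) hh (fun i => by simp [hh]) hb0 hw0 hb hw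
  calc b n + R * ∑ p ∈ antidiagonal n, b p.1 * w p.2
      ≤ T n * h n + R * (T n * ∑ p ∈ antidiagonal n, h p.1 * (2 * h p.2)) := by
        gcongr
        simpa using hconv
    _ = T n * h n + 2 * R * T n * ∑ p ∈ antidiagonal n, h p.1 * h p.2 := by
        simp only [mul_sum]; ring_nf
    _ ≤ T n * h n + 2 * R * T n * (8 / c * h n) := by
        gcongr
        exacts [mul_nonneg (by positivity) (hT n), sum_antidiagonal_majorantCoeff_mul_le hc n]
    _ = (1 + 16 * R / c) * (T n * h n) := by ring
    _ ≤ 2 * (T n * h n) :=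
        mul_le_mul_of_nonneg_right (by linarith [(div_le_one hc).mpr hcR])
          (mul_nonneg (hT n) (hh n))
    _ = T n * (2 * h n) := by ring

theorem le_maxTreeProd_mul_majorantCoeff (hε : ∀ n, 1 ≤ n → 0 < ε n) (hK : 0 ≤ K)
    (hR : 0 ≤ R) (hc : 0 < c) (hcK : 64 * K ≤ c) (hcR : 16 * R ≤ c) (hb0 : b 0 = 0)
    (hb1 : b 1 = 1)
    (hbrec : ∀ n, 2 ≤ n → b n = ε (n - 1) * (2 * K * ∑ p ∈ antidiagonal n, w p.1 * w p.2))
    (hwrec : ∀ n, w n = b n + R * ∑ p ∈ antidiagonal n, b p.1 * w p.2) (n : ℕ) :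
    (0 ≤ b n ∧ b n ≤ maxTreeProd (divisorWeight ε) n * majorantCoeff c n) ∧
      (0 ≤ w n ∧ w n ≤ maxTreeProd (divisorWeight ε) n * (2 * majorantCoeff c n)) := by
  have hw0 : w 0 = 0 := by simpa [hb0] using hwrec 0
  induction n using Nat.strong_induction_on with
  | _ n ih =>
  have hb : 0 ≤ b n ∧ b n ≤ maxTreeProd (divisorWeight ε) n * majorantCoeff c n := by
    rcases Nat.lt_or_ge n 2 with hn | hn
    · interval_cases n
      · simp [hb0]
      · simpa [hb1] using one_le_maxTreeProd (one_le_divisorWeight ε) 1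
    rw [hbrec n hn]
    refine ⟨mul_nonneg (hε _ (by omega)).le (mul_nonneg (by positivity) ?_),
      eps_mul_sum_antidiagonal_le_maxTreeProd_mul hε hK hc hcK hn hw0 fun i hi => (ih i hi).2⟩
    exact sum_antidiagonal_mul_nonneg hw0 hw0 (fun i hi => (ih i hi).2.1) fun i hi => (ih i hi).2.1
  rw [hwrec n]
  refine ⟨hb, add_nonneg hb.1 (mul_nonneg hR ?_), add_mul_sum_antidiagonal_le_maxTreeProd_mul
    (one_le_divisorWeight ε) hR hc hcR hb0 hw0 hb.2 (fun i hi => (ih i hi).1)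
    fun i hi => (ih i hi).2⟩
  exact sum_antidiagonal_mul_nonneg hb0 hw0 (fun i hi => (ih i hi).1.1) fun i hi => (ih i hi).2.1

end MajorantBound

open PowerSeries

theorem exists_coeff_recursion {ε : ℕ → ℝ} {K R : ℝ} {B : PowerSeries ℝ}
    (hε : ∀ n, 1 ≤ n → 0 < ε n) (hB0 : constantCoeff B = 0)
    (heq : (PowerSeries.mk fun n => if 2 ≤ n then (ε (n - 1))⁻¹ * coeff n B else 0)
        * (1 - C R * B) ^ 2 = C (2 * K) * B ^ 2) :
    ∃ W : PowerSeries ℝ,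
      (∀ n, 2 ≤ n →
        coeff n B = ε (n - 1) * (2 * K * ∑ p ∈ antidiagonal n, coeff p.1 W * coeff p.2 W)) ∧
      ∀ n, coeff n W = coeff n B + R * ∑ p ∈ antidiagonal n, coeff p.1 B * coeff p.2 W := by
  set A := PowerSeries.mk fun n => if 2 ≤ n then (ε (n - 1))⁻¹ * coeff n B else 0
  set V := (1 - C R * B)⁻¹
  have hV : (1 - C R * B) * V = 1 := PowerSeries.mul_inv_cancel _ (by simp [hB0])
  refine ⟨B * V, fun n hn => ?_, fun n => ?_⟩
  · have hA : A = C (2 * K) * ((B * V) * (B * V)) := by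
      linear_combination (-A * (1 + (1 - C R * B) * V)) * hV + V ^ 2 * heq
    have h := congrArg (coeff n) hA
    rw [coeff_mk, if_pos hn, coeff_C_mul, coeff_mul] at h
    rw [← h, mul_inv_cancel_left₀ (hε _ (by omega)).ne']
  · have h : B * V = B + C R * (B * (B * V)) := by linear_combination B * hV
    conv_lhs => rw [h]
    rw [map_add, coeff_C_mul, coeff_mul]

theorem lt_rpow_pow_of_le_two_pow {ε : ℕ → ℝ} {α : ℝ} (hα : 0 < α)
    (hgrow : ∀ l : ℕ, 1 ≤ l → ε l < (2 * (l : ℝ)) ^ α) (s : ℕ) {l : ℕ} (hl : 1 ≤ l)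
    (hls : l ≤ 2 ^ s) : ε l < ((2 : ℝ) ^ α) ^ (s + 1) :=
  calc ε l < (2 * (l : ℝ)) ^ α := hgrow l hl
    _ ≤ ((2 : ℝ) ^ (s + 1)) ^ α := by
        gcongr
        rw [pow_succ']
        exact_mod_cast Nat.mul_le_mul_left 2 hls
    _ = ((2 : ℝ) ^ α) ^ (s + 1) := (Real.rpow_pow_comm (by norm_num) α (s + 1)).symm

theorem summable_mul_inv_pow_of_le_pow {a : ℕ → ℝ} {M : ℝ} (hM : 0 < M) (h0 : ∀ n, 0 ≤ a n)
    (h : ∀ n, a n ≤ M ^ n) : Summable fun n => a n * (2 * M)⁻¹ ^ n := by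
  refine Summable.of_nonneg_of_le (fun n => mul_nonneg (h0 n) (by positivity)) (fun n => ?_)
    (summable_geometric_two)
  calc a n * (2 * M)⁻¹ ^ n ≤ M ^ n * (2 * M)⁻¹ ^ n := by gcongr; exact h n
    _ = (1 / 2) ^ n := by rw [← mul_pow]; congr 1; field_simp

/-- The majorant series for Theorem 1.1 (ii): the formal power series
`B(X) = X + ∑_{n≥2} B_n X^n` determined by
`∑_{n≥2} ε_{n-1}⁻¹ B_n X^n = 2K B(X)² / (1 - R B(X))²` (denominators cleared)
has non-negative coefficients and positive radius of convergence. -/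
theorem majorant_series_ii
    (ε : ℕ → ℝ) (hεpos : ∀ n, 1 ≤ n → 0 < ε n)
    (α : ℝ) (hα : 0 < α)
    (hgrow : ∀ l : ℕ, 1 ≤ l → ε l < (2 * (l : ℝ)) ^ α)
    (hsub : ∀ ν μ : ℕ, 1 ≤ μ → μ < ν → (ε (ν - μ))⁻¹ ≤ (ε ν)⁻¹ + (ε μ)⁻¹)
    (K R : ℝ) (hK : 0 < K) (hR : 0 < R)
    (B : PowerSeries ℝ) (hB0 : constantCoeff B = 0) (hB1 : coeff 1 B = 1)
    (heq : (PowerSeries.mk fun n => if 2 ≤ n then (ε (n - 1))⁻¹ * coeff n B else 0)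
        * (1 - C R * B) ^ 2 = C (2 * K) * B ^ 2) :
    (∀ n, 0 ≤ coeff n B) ∧ ∃ r : ℝ, 0 < r ∧ Summable fun n => coeff n B * r ^ n := by
  obtain ⟨W, hBrec, hWrec⟩ := exists_coeff_recursion hεpos hB0 heq
  set c := 64 * K + 16 * R + 1
  have hbound := le_maxTreeProd_mul_majorantCoeff (c := c) hεpos hK.le hR.le (by positivity)
    (by linarith) (by linarith) (by simpa using hB0) hB1 hBrec hWrec
  refine ⟨fun n => (hbound n).1.1, ?_⟩
  set D := 2 * ((2 : ℝ) ^ α) ^ 5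
  have hβ : 1 ≤ (2 : ℝ) ^ α := Real.one_le_rpow (by norm_num) hα.le
  have hsiegel (t : BinaryTree Unit) :=
    nodeProd_divisorWeight_le_pow hβ (lt_rpow_pow_of_le_two_pow hα hgrow) hεpos hsub t
  have hB (n : ℕ) : coeff n B ≤ (D * c) ^ n := by
    rcases Nat.eq_zero_or_pos n with rfl | hn
    · simp [hB0]
    calc coeff n B ≤ maxTreeProd (divisorWeight ε) n * majorantCoeff c n := (hbound n).1.2
      _ ≤ D ^ n * c ^ n := by
        gcongr
        · exact majorantCoeff_nonneg (by positivity) n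
        · exact maxTreeProd_le_pow hsiegel hn
        · exact majorantCoeff_le_pow (by linarith) n
      _ = (D * c) ^ n := (mul_pow D c n).symm
  exact ⟨_, by positivity,
    summable_mul_inv_pow_of_le_pow (by positivity) (fun n => (hbound n).1.1) hB⟩
end

section
/- Let $\{\varepsilon_n\}_{n\geq 1}$, $K, R$ be as above, and let $B(X)=X+\sum B_n X^n$ satisfy $\sum_{n\geq 2}\varepsilon_{n-1}^{-1}B_n X^n = \frac{2K B(X)^2}{(1-RB(X))^2}$. Let $\widetilde{A}_n \geq 0$ be real numbers with $\widetilde{A}_1 = 1$ satisfying $\sum_{n\geq 2}\varepsilon_{n-1}^{-1}\widetilde{A}_n X^n = \frac{K}{1-RX}\left((\widetilde{A}(X)-X)X + \frac{\widetilde{A}(X)^2}{1-R\widetilde{A}(X)}\right)$ where $\widetilde{A}(X)=\sum_{n\geq 1}\widetilde{A}_n X^n$. Then $\widetilde{A}_n \leq B_n$ for every $n \geq 2$. -/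
/-!
Solving both functional equations, the weighted series `∑ ε_{n-1}⁻¹ c_n Xⁿ` becomes
`K (1 - RX)⁻¹ ((Ã - X) X + Ã² (1 - RÃ)⁻¹)` for `c = Ã` and `K (1 - RB)⁻¹ · 2 B² (1 - RB)⁻¹` for
`c = B`. All factors have non-negative coefficients, `(1 - RX)⁻¹ ≤ (1 - RB)⁻¹` and
`(Ã - X) X ≤ Ã² ≤ Ã² (1 - RÃ)⁻¹` coefficientwise, and multiplication and `f ↦ (1 - Rf)⁻¹` are
monotone on such series. Since `Ã`, `B` have no constant term, the `n`-th coefficient of either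
right-hand side only involves the coefficients of `Ã` resp. `B` below `n`, so `Ã_m ≤ B_m` for
`m < n` propagates to `m = n`.
-/

open PowerSeries Finset

namespace PowerSeries

section OrderedSemiring

variable {R : Type*} [CommSemiring R] [PartialOrder R] {n : ℕ} {f g h h' : R⟦X⟧}

def TruncLE (n : ℕ) (f g : R⟦X⟧) : Prop :=
  ∀ m < n, coeff m f ≤ coeff m g

theorem TruncLE.refl (n : ℕ) (f : R⟦X⟧) : TruncLE n f f :=
  fun _ _ => le_rfl

theorem TruncLE.trans (hfg : TruncLE n f g) (hgh : TruncLE n g h) : TruncLE n f h :=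
  fun m hm => (hfg m hm).trans (hgh m hm)

theorem TruncLE.mono {k : ℕ} (hfg : TruncLE n f g) (hkn : k ≤ n) : TruncLE k f g :=
  fun m hm => hfg m (hm.trans_le hkn)

theorem truncLE_of_coeff_le (hfg : ∀ m, coeff m f ≤ coeff m g) : TruncLE n f g :=
  fun m _ => hfg m

theorem truncLE_succ_iff : TruncLE (n + 1) f g ↔ TruncLE n f g ∧ coeff n f ≤ coeff n g :=
  ⟨fun hfg => ⟨hfg.mono n.le_succ, hfg n n.lt_succ_self⟩, fun ⟨hfg, hn⟩ m hm =>
    (Nat.lt_succ_iff_lt_or_eq.mp hm).elim (hfg m) (fun hmn => hmn ▸ hn)⟩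

theorem truncLE_succ_X_mul_iff : TruncLE (n + 1) (X * f) (X * g) ↔ TruncLE n f g := by
  refine ⟨fun hfg m hm => ?_, fun hfg m hm => ?_⟩
  · simpa only [coeff_succ_X_mul] using hfg (m + 1) (by omega)
  · cases m with
    | zero => simp only [coeff_zero_X_mul, le_refl]
    | succ m => simpa only [coeff_succ_X_mul] using hfg m (by omega)

variable [IsOrderedRing R]

theorem TruncLE.add (hfg : TruncLE n f g) (hhh : TruncLE n h h') :
    TruncLE n (f + h) (g + h') :=
  fun m hm => by simpa only [map_add] using add_le_add (hfg m hm) (hhh m hm)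

theorem TruncLE.C_mul {c : R} (hc : 0 ≤ c) (hfg : TruncLE n f g) :
    TruncLE n (C c * f) (C c * g) :=
  fun m hm => by simpa only [coeff_C_mul] using mul_le_mul_of_nonneg_left (hfg m hm) hc

theorem coeff_mul_nonneg (hf : ∀ m, 0 ≤ coeff m f) (hg : ∀ m, 0 ≤ coeff m g) (m : ℕ) :
    0 ≤ coeff m (f * g) := by
  rw [coeff_mul]
  exact sum_nonneg fun p _ => mul_nonneg (hf _) (hg _)

theorem TruncLE.mul (hf : ∀ m, 0 ≤ coeff m f) (hh : ∀ m, 0 ≤ coeff m h)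
    (hfg : TruncLE n f g) (hhh : TruncLE n h h') : TruncLE n (f * h) (g * h') := by
  intro m hm
  rw [coeff_mul, coeff_mul]
  refine sum_le_sum fun p hp => ?_
  have hp := mem_antidiagonal.mp hp
  exact mul_le_mul (hfg _ (by omega)) (hhh _ (by omega)) (hh _) ((hf _).trans (hfg _ (by omega)))

theorem TruncLE.mul_of_constantCoeff_eq_zero (hf0 : constantCoeff f = 0)
    (hg0 : constantCoeff g = 0) (hf : ∀ m, 0 ≤ coeff m f) (hh : ∀ m, 0 ≤ coeff m h)
    (hfg : TruncLE (n + 1) f g) (hhh : TruncLE n h h') :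
    TruncLE (n + 1) (f * h) (g * h') := by
  obtain ⟨f, rfl⟩ := X_dvd_iff.mpr hf0
  obtain ⟨g, rfl⟩ := X_dvd_iff.mpr hg0
  rw [mul_assoc, mul_assoc, truncLE_succ_X_mul_iff]
  have hf' : ∀ m, 0 ≤ coeff m f := fun m => by simpa only [coeff_succ_X_mul] using hf (m + 1)
  exact (truncLE_succ_X_mul_iff.mp hfg).mul hf' hh hhh

theorem TruncLE.mul_succ_of_constantCoeff_eq_zero (hf0 : constantCoeff f = 0)
    (hg0 : constantCoeff g = 0) (hh0 : constantCoeff h = 0) (hh'0 : constantCoeff h' = 0)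
    (hf : ∀ m, 0 ≤ coeff m f) (hh : ∀ m, 0 ≤ coeff m h)
    (hfg : TruncLE (n + 1) f g) (hhh : TruncLE (n + 1) h h') :
    TruncLE (n + 2) (f * h) (g * h') := by
  obtain ⟨h, rfl⟩ := X_dvd_iff.mpr hh0
  obtain ⟨h', rfl⟩ := X_dvd_iff.mpr hh'0
  rw [mul_left_comm, mul_left_comm g, truncLE_succ_X_mul_iff]
  have hh₁ : ∀ m, 0 ≤ coeff m h := fun m => by simpa only [coeff_succ_X_mul] using hh (m + 1)
  exact hfg.mul_of_constantCoeff_eq_zero hf0 hg0 hf hh₁ (truncLE_succ_X_mul_iff.mp hhh)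

end OrderedSemiring

section OrderedField

variable {𝕜 : Type*} [Field 𝕜] [LinearOrder 𝕜] [IsStrictOrderedRing 𝕜] {r : 𝕜} {n : ℕ}
  {f g A B M : 𝕜⟦X⟧}

theorem inv_one_sub_C_mul_eq (hf0 : constantCoeff f = 0) :
    (1 - C r * f)⁻¹ = 1 + C r * (f * (1 - C r * f)⁻¹) := by
  have h := PowerSeries.mul_inv_cancel (1 - C r * f) (by simp [hf0])
  linear_combination h

theorem coeff_inv_one_sub_C_mul_nonneg (hr : 0 ≤ r) (hf0 : constantCoeff f = 0)
    (hf : ∀ m, 0 ≤ coeff m f) (m : ℕ) : 0 ≤ coeff m (1 - C r * f)⁻¹ := by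
  induction m using Nat.strong_induction_on with
  | _ m ih =>
    rw [inv_one_sub_C_mul_eq hf0, map_add, coeff_C_mul, coeff_mul]
    refine add_nonneg ?_ (mul_nonneg hr (sum_nonneg fun p hp => ?_))
    · rw [coeff_one]; split_ifs <;> norm_num
    · rcases Nat.eq_zero_or_pos p.1 with hp1 | hp1
      · simp [hp1, hf0]
      · exact mul_nonneg (hf _) (ih _ (by have := mem_antidiagonal.mp hp; omega))

theorem TruncLE.inv_one_sub_C_mul (hr : 0 ≤ r) (hf0 : constantCoeff f = 0)
    (hg0 : constantCoeff g = 0) (hf : ∀ m, 0 ≤ coeff m f) (hfg : TruncLE n f g) :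
    TruncLE n (1 - C r * f)⁻¹ (1 - C r * g)⁻¹ := by
  induction n with
  | zero => exact fun m hm => absurd hm m.not_lt_zero
  | succ n ih =>
    rw [inv_one_sub_C_mul_eq hf0, inv_one_sub_C_mul_eq hg0]
    exact (TruncLE.refl _ 1).add <| TruncLE.C_mul hr <|
      hfg.mul_of_constantCoeff_eq_zero hf0 hg0 hf (coeff_inv_one_sub_C_mul_nonneg hr hf0 hf)
        (ih (hfg.mono n.le_succ))

theorem truncLE_one_inv_one_sub_C_mul (hr : 0 ≤ r) (hf0 : constantCoeff f = 0)
    (hf : ∀ m, 0 ≤ coeff m f) : TruncLE n 1 (1 - C r * f)⁻¹ := by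
  simpa using (truncLE_of_coeff_le (f := 0) (by simpa using hf)).inv_one_sub_C_mul hr
    (map_zero _) hf0 (fun _ => by simp)

theorem TruncLE.majorant_rhs (hr : 0 ≤ r) (hA0 : constantCoeff A = 0) (hB0 : constantCoeff B = 0)
    (hA : ∀ m, 0 ≤ coeff m A) (hA1 : coeff 1 A = 1) (hAB : TruncLE (n + 1) A B) :
    TruncLE (n + 2) (((A - X) * X + A * A * (1 - C r * A)⁻¹) * (1 - C r * X)⁻¹)
      ((B * B * (1 - C r * B)⁻¹ + B * B * (1 - C r * B)⁻¹) * (1 - C r * B)⁻¹) := by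
  have hX : ∀ m, 0 ≤ coeff m (X : 𝕜⟦X⟧) := fun m => by rw [coeff_X]; split_ifs <;> norm_num
  have hXA : ∀ m, coeff m (X : 𝕜⟦X⟧) ≤ coeff m A := fun m => by
    rw [coeff_X]
    split_ifs with hm
    · rw [hm, hA1]
    · exact hA m
  have hAX : ∀ m, 0 ≤ coeff m (A - X) := fun m => by rw [map_sub]; linarith [hXA m]
  have hAXA : ∀ m, coeff m (A - X) ≤ coeff m A := fun m => by rw [map_sub]; linarith [hX m]
  have hS := coeff_inv_one_sub_C_mul_nonneg hr hA0 hA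
  have hAA := coeff_mul_nonneg hA hA
  have hAA0 : constantCoeff (A * A) = 0 := by simp [hA0]
  have hAAS : TruncLE (n + 2) (A * A * (1 - C r * A)⁻¹) (B * B * (1 - C r * B)⁻¹) :=
    (hAB.mul_succ_of_constantCoeff_eq_zero hA0 hB0 hA0 hB0 hA hA hAB).mul_of_constantCoeff_eq_zero
      hAA0 (by simp [hB0]) hAA hS (hAB.inv_one_sub_C_mul hr hA0 hB0 hA)
  have hXle : TruncLE (n + 2) ((A - X) * X) (A * A * (1 - C r * A)⁻¹) := by
    have hAA_le : TruncLE (n + 2) (A * A * 1) (A * A * (1 - C r * A)⁻¹) :=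
      (TruncLE.refl _ _).mul hAA (fun m => by rw [coeff_one]; split_ifs <;> norm_num)
        (truncLE_one_inv_one_sub_C_mul hr hA0 hA)
    rw [mul_one] at hAA_le
    exact ((truncLE_of_coeff_le hAXA).mul hAX hX (truncLE_of_coeff_le hXA)).trans hAA_le
  have hPT : TruncLE (n + 1) (1 - C r * X)⁻¹ (1 - C r * B)⁻¹ :=
    ((truncLE_of_coeff_le hXA).trans hAB).inv_one_sub_C_mul hr constantCoeff_X hB0 hX
  exact (hXle.trans hAAS |>.add hAAS).mul_of_constantCoeff_eq_zero (by simp [hA0]) (by simp [hB0])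
    (fun m => by
      rw [map_add]
      exact add_nonneg (coeff_mul_nonneg hAX hX m) (coeff_mul_nonneg hAA hS m))
    (coeff_inv_one_sub_C_mul_nonneg hr constantCoeff_X hX) hPT

theorem eq_C_mul_of_mul_one_sub_C_mul_sq_eq {K : 𝕜} (hB0 : constantCoeff B = 0)
    (h : M * (1 - C r * B) ^ 2 = C (2 * K) * B ^ 2) :
    M = C K * ((B * B * (1 - C r * B)⁻¹ + B * B * (1 - C r * B)⁻¹) * (1 - C r * B)⁻¹) := by
  have hT := PowerSeries.mul_inv_cancel (1 - C r * B) (by simp [hB0])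
  rw [map_mul, map_ofNat] at h
  linear_combination ((1 - C r * B)⁻¹) ^ 2 * h - M * ((1 - C r * B) * (1 - C r * B)⁻¹ + 1) * hT

theorem eq_C_mul_of_mul_one_sub_C_mul_X_mul_eq {K : 𝕜} (hA0 : constantCoeff A = 0)
    (h : M * (1 - C r * X) * (1 - C r * A) = C K * ((A - X) * X * (1 - C r * A) + A ^ 2)) :
    M = C K * (((A - X) * X + A * A * (1 - C r * A)⁻¹) * (1 - C r * X)⁻¹) := by
  have hP := PowerSeries.mul_inv_cancel (1 - C r * X) (by simp)
  have hS := PowerSeries.mul_inv_cancel (1 - C r * A) (by simp [hA0])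
  linear_combination (1 - C r * X)⁻¹ * (1 - C r * A)⁻¹ * h
    - M * ((1 - C r * A) * (1 - C r * A)⁻¹) * hP - M * hS
    + C K * (A - X) * X * (1 - C r * X)⁻¹ * hS

end OrderedField

end PowerSeries

/-- Coefficient comparison in Section 4.2: the coefficients of `Ã` (the
diagonalized majorant of `A(X,Y)`) are bounded by those of the majorant `B`. -/
theorem coefficient_comparison_ii
    (ε : ℕ → ℝ) (hεpos : ∀ n, 1 ≤ n → 0 < ε n)
    (K R : ℝ) (hK : 0 < K) (hR : 0 < R)
    (B : PowerSeries ℝ) (hB0 : constantCoeff B = 0) (hB1 : coeff 1 B = 1)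
    (heqB : (PowerSeries.mk fun n => if 2 ≤ n then (ε (n - 1))⁻¹ * coeff n B else 0)
        * (1 - C R * B) ^ 2 = C (2 * K) * B ^ 2)
    (At : PowerSeries ℝ) (hAt0 : constantCoeff At = 0) (hAt1 : coeff 1 At = 1)
    (hAtnonneg : ∀ n, 0 ≤ coeff n At)
    (heqAt : (PowerSeries.mk fun n => if 2 ≤ n then (ε (n - 1))⁻¹ * coeff n At else 0)
        * (1 - C R * X) * (1 - C R * At)
        = C K * ((At - X) * X * (1 - C R * At) + At ^ 2)) :
    ∀ n, 2 ≤ n → coeff n At ≤ coeff n B := by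
  have hA := fun n => congrArg (coeff n) (eq_C_mul_of_mul_one_sub_C_mul_X_mul_eq hAt0 heqAt)
  have hB := fun n => congrArg (coeff n) (eq_C_mul_of_mul_one_sub_C_mul_sq_eq hB0 heqB)
  have key : ∀ n, TruncLE (n + 2) At B := by
    intro n
    induction n with
    | zero =>
      intro m hm
      interval_cases m
      · simp [hAt0, hB0]
      · rw [hAt1, hB1]
    | succ n ih =>
      refine truncLE_succ_iff.mpr ⟨ih, ?_⟩
      have hAn := hA (n + 2)
      have hBn := hB (n + 2)
      simp only [coeff_mk, coeff_C_mul, if_pos (Nat.le_add_left 2 n)] at hAn hBn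
      refine le_of_mul_le_mul_left ?_ (inv_pos.mpr (hεpos (n + 2 - 1) (by omega)))
      rw [hAn, hBn]
      exact mul_le_mul_of_nonneg_left
        (ih.majorant_rhs hR.le hAt0 hB0 hAtnonneg hAt1 (n + 2) (by omega)) hK.le
  exact fun n hn => key (n - 1) n (by omega)
end
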